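/- arXiv:2006.07214 — 8 statements merged into one kernel-verified Lean document; each statement's English description precedes it below -/
import Mathlib

section
/- Let ν be a measure on a measurable space S and let p : S → [0,∞) be a probability density with respect to ν (i.e. ∫_S p dν = 1). Assume there exists α₀ > 1 with ∫_S p^{α₀} dν < ∞, there exists α₁ ∈ (0,1) with ∫_S p^{α₁} dν < ∞, and ∫_S p |log p| dν < ∞ (with the convention 0·log 0 = 0). Then the limit as α → 1 (α ≠ 1) of (1/(α(α−1)))(∫_S p^α dν − 1) equals ∫_S p log p dν. -/
open Filter Real MeasureTheory

lemma aux_exp_abs (u : ℝ) : |Real.exp u - 1| ≤ |u| * Real.exp |u| := by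
  rcases le_or_gt 0 u with h | h
  · rw [abs_of_nonneg h, abs_of_nonneg (by linarith [Real.add_one_le_exp u])]
    have h1 := Real.add_one_le_exp (-u)
    have h2 : Real.exp (-u) * Real.exp u = 1 := by rw [← Real.exp_add]; simp
    nlinarith [Real.exp_pos u]
  · rw [abs_of_neg h, abs_of_nonpos (by simp [Real.exp_le_one_iff.mpr h.le])]
    have := Real.add_one_le_exp u
    nlinarith [Real.one_le_exp (le_of_lt (neg_pos.mpr h)), Real.exp_pos u]

/-- key domination bound -/
lemma aux_key {x α₀ α₁ ε α : ℝ} (hx : 0 ≤ x) (hε : 0 < ε)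
    (h0 : 1 + ε < α₀) (h1 : 0 < α₁) (h1' : α₁ < 1 - ε) (hα : |α - 1| ≤ ε) :
    |x ^ α - x| ≤ |α - 1| *
      (2 * (x * |Real.log x|) + x ^ α₀ / (α₀ - (1 + ε)) + x ^ α₁ / (1 - ε - α₁)) := by
  have hδ₀ : 0 < α₀ - (1 + ε) := by linarith
  have hδ₁ : 0 < 1 - ε - α₁ := by linarith
  rcases eq_or_lt_of_le hx with hx0 | hx0
  · have hα0 : α ≠ 0 := by intro h; rw [h] at hα; simp at hα; linarith [abs_nonneg (0 - 1 : ℝ)]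
    have : α ≥ 1 - ε := by cases abs_le.mp hα; linarith
    rw [← hx0]
    rw [Real.zero_rpow (by linarith : α ≠ 0), Real.zero_rpow (ne_of_gt (by linarith) : α₀ ≠ 0),
      Real.zero_rpow (ne_of_gt h1 : α₁ ≠ 0)]
    simp
  · -- x > 0
    have hlx : x ^ α - x = x * (Real.exp ((α - 1) * Real.log x) - 1) := by
      rw [Real.rpow_def_of_pos hx0]
      have : Real.log x * α = (α - 1) * Real.log x + Real.log x := by ring
      rw [this, Real.exp_add, Real.exp_log hx0]
      ring
    rw [hlx, abs_mul, abs_of_pos hx0]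
    have hb := aux_exp_abs ((α - 1) * Real.log x)
    have hexpb : Real.exp (|(α - 1) * Real.log x|) ≤ x ^ ε + x ^ (-ε) := by
      rw [abs_mul]
      have h1e : |α - 1| * |Real.log x| ≤ ε * |Real.log x| :=
        mul_le_mul_of_nonneg_right hα (abs_nonneg _)
      calc Real.exp (|α - 1| * |Real.log x|) ≤ Real.exp (ε * |Real.log x|) :=
            Real.exp_le_exp.mpr h1e
        _ ≤ x ^ ε + x ^ (-ε) := by
            rcases le_or_gt 0 (Real.log x) with hl | hl
            · rw [abs_of_nonneg hl]
              have : Real.exp (ε * Real.log x) = x ^ ε := by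
                rw [Real.rpow_def_of_pos hx0]; ring_nf
              rw [this]
              have : (0:ℝ) < x ^ (-ε) := Real.rpow_pos_of_pos hx0 _
              linarith
            · rw [abs_of_neg hl]
              have : Real.exp (ε * -Real.log x) = x ^ (-ε) := by
                rw [Real.rpow_def_of_pos hx0]; ring_nf
              rw [this]
              have : (0:ℝ) < x ^ ε := Real.rpow_pos_of_pos hx0 _
              linarith
    have step1 : x * |Real.exp ((α - 1) * Real.log x) - 1| ≤
        |α - 1| * (|Real.log x| * (x ^ (1 + ε) + x ^ (1 - ε))) := by
      calc x * |Real.exp ((α - 1) * Real.log x) - 1|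
          ≤ x * (|(α - 1) * Real.log x| * Real.exp (|(α - 1) * Real.log x|)) :=
            mul_le_mul_of_nonneg_left hb hx0.le
        _ ≤ x * (|(α - 1) * Real.log x| * (x ^ ε + x ^ (-ε))) := by
            apply mul_le_mul_of_nonneg_left _ hx0.le
            exact mul_le_mul_of_nonneg_left hexpb (abs_nonneg _)
        _ = |α - 1| * (|Real.log x| * (x * x ^ ε + x * x ^ (-ε))) := by
            rw [abs_mul]; ring
        _ = |α - 1| * (|Real.log x| * (x ^ (1 + ε) + x ^ (1 - ε))) := by
            rw [show x * x ^ ε = x ^ (1:ℝ) * x ^ ε by rw [Real.rpow_one],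
              show x * x ^ (-ε) = x ^ (1:ℝ) * x ^ (-ε) by rw [Real.rpow_one],
              ← Real.rpow_add hx0, ← Real.rpow_add hx0,
              show (1:ℝ) + -ε = 1 - ε by ring]
    refine step1.trans (mul_le_mul_of_nonneg_left ?_ (abs_nonneg _))
    -- remains: |log x| * (x^(1+ε) + x^(1-ε)) ≤ 2 x|log x| + x^α₀/δ₀ + x^α₁/δ₁
    rcases le_or_gt 1 x with hx1 | hx1
    · have hl0 : 0 ≤ Real.log x := Real.log_nonneg hx1
      rw [abs_of_nonneg hl0]
      have e1 : Real.log x * x ^ (1 + ε) ≤ x ^ α₀ / (α₀ - (1 + ε)) := by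
        have := Real.log_le_rpow_div hx (show (0:ℝ) < α₀ - (1 + ε) from hδ₀)
        calc Real.log x * x ^ (1 + ε) ≤ (x ^ (α₀ - (1 + ε)) / (α₀ - (1 + ε))) * x ^ (1 + ε) :=
              mul_le_mul_of_nonneg_right this (Real.rpow_nonneg hx _)
          _ = x ^ α₀ / (α₀ - (1 + ε)) := by
              rw [div_mul_eq_mul_div, ← Real.rpow_add hx0,
                show α₀ - (1 + ε) + (1 + ε) = α₀ by ring]
      have e2 : Real.log x * x ^ (1 - ε) ≤ x * Real.log x := by
        have : x ^ (1 - ε) ≤ x ^ (1:ℝ) :=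
          Real.rpow_le_rpow_of_exponent_le hx1 (by linarith)
        rw [Real.rpow_one] at this
        calc Real.log x * x ^ (1 - ε) ≤ Real.log x * x :=
              mul_le_mul_of_nonneg_left this hl0
          _ = x * Real.log x := mul_comm _ _
      have h3 : 0 ≤ x ^ α₁ / (1 - ε - α₁) := by positivity
      have h4 : 0 ≤ x * Real.log x := mul_nonneg hx hl0
      nlinarith
    · have hl0 : Real.log x < 0 := Real.log_neg hx0 hx1
      rw [abs_of_neg hl0]
      have e1 : (-Real.log x) * x ^ (1 + ε) ≤ x * (-Real.log x) := by
        have : x ^ (1 + ε) ≤ x ^ (1:ℝ) :=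
          Real.rpow_le_rpow_of_exponent_ge hx0 hx1.le (by linarith)
        rw [Real.rpow_one] at this
        calc (-Real.log x) * x ^ (1 + ε) ≤ (-Real.log x) * x :=
              mul_le_mul_of_nonneg_left this (by linarith)
          _ = x * (-Real.log x) := mul_comm _ _
      have e2 : (-Real.log x) * x ^ (1 - ε) ≤ x ^ α₁ / (1 - ε - α₁) := by
        have hli : -Real.log x = Real.log x⁻¹ := (Real.log_inv x) ▸ rfl
        have hlog_le : Real.log x⁻¹ ≤ (x⁻¹) ^ (1 - ε - α₁) / (1 - ε - α₁) :=
          Real.log_le_rpow_div (by positivity) hδ₁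
        have hxinv : (x⁻¹) ^ (1 - ε - α₁) = x ^ (-(1 - ε - α₁)) := by
          rw [Real.inv_rpow hx, ← Real.rpow_neg hx]
        calc (-Real.log x) * x ^ (1 - ε)
            ≤ (x ^ (-(1 - ε - α₁)) / (1 - ε - α₁)) * x ^ (1 - ε) := by
              apply mul_le_mul_of_nonneg_right _ (Real.rpow_nonneg hx _)
              rw [hli]; rw [hxinv] at hlog_le; exact hlog_le
          _ = x ^ α₁ / (1 - ε - α₁) := by
              rw [div_mul_eq_mul_div, ← Real.rpow_add hx0,
                show -(1 - ε - α₁) + (1 - ε) = α₁ by ring]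
      have h3 : 0 ≤ x ^ α₀ / (α₀ - (1 + ε)) := by positivity
      have h4 : 0 ≤ x * (-Real.log x) := mul_nonneg hx (by linarith)
      nlinarith

lemma aux_ptwise {x : ℝ} (hx : 0 ≤ x) :
    Tendsto (fun α : ℝ => (x ^ α - x) / (α - 1)) (nhdsWithin 1 {(1:ℝ)}ᶜ)
      (nhds (x * Real.log x)) := by
  rcases eq_or_lt_of_le hx with hx0 | hx0
  · have hev : ∀ᶠ α : ℝ in nhdsWithin 1 {(1:ℝ)}ᶜ, (0:ℝ) = (x ^ α - x) / (α - 1) := by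
      have h1 : ∀ᶠ α : ℝ in nhds 1, α ∈ Set.Ioi (0:ℝ) :=
        isOpen_Ioi.eventually_mem (by norm_num)
      filter_upwards [eventually_nhdsWithin_of_eventually_nhds h1] with α hα
      rw [← hx0, Real.zero_rpow (ne_of_gt hα)]; simp
    have : x * Real.log x = 0 := by rw [← hx0]; simp
    rw [this]
    exact Tendsto.congr' hev tendsto_const_nhds
  · have hd : HasDerivAt (fun α : ℝ => x ^ α) (x * Real.log x) 1 := by
      have h1 : HasDerivAt (fun α : ℝ => Real.log x * α) (Real.log x) 1 := by
        simpa using (hasDerivAt_id (1:ℝ)).const_mul (Real.log x)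
      have h2 := h1.exp
      have heq : (fun α : ℝ => Real.exp (Real.log x * α)) = fun α : ℝ => x ^ α := by
        funext α; rw [Real.rpow_def_of_pos hx0]
      rw [heq] at h2
      convert h2 using 1
      rw [mul_one, Real.exp_log hx0, mul_comm]
    have := hasDerivAt_iff_tendsto_slope.mp hd
    refine this.congr (fun α => ?_)
    rw [slope_def_field, Real.rpow_one]

/-- Limit of the α-Tsallis negentropy as α → 1 is the Shannon negentropy. -/
theorem stmt_1 {S : Type*} [MeasurableSpace S] (ν : Measure S) (p : S → ℝ)
    (hp_meas : Measurable p) (hp_nonneg : ∀ t, 0 ≤ p t)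
    (hp_int : Integrable p ν) (hp_one : ∫ t, p t ∂ν = 1)
    (h0 : ∃ α₀ : ℝ, 1 < α₀ ∧ Integrable (fun t => p t ^ α₀) ν)
    (h1 : ∃ α₁ : ℝ, 0 < α₁ ∧ α₁ < 1 ∧ Integrable (fun t => p t ^ α₁) ν)
    (hlog : Integrable (fun t => p t * |Real.log (p t)|) ν) :
    Tendsto (fun α : ℝ => (1 / (α * (α - 1))) * ((∫ t, p t ^ α ∂ν) - 1))
      (nhdsWithin 1 {(1 : ℝ)}ᶜ) (nhds (∫ t, p t * Real.log (p t) ∂ν)) := by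
  obtain ⟨α₀, hα₀, hint0⟩ := h0
  obtain ⟨α₁, hα₁, hα₁', hint1⟩ := h1
  set ε : ℝ := min ((α₀ - 1) / 2) ((1 - α₁) / 2) with hεdef
  have hε : 0 < ε := lt_min (by linarith) (by linarith)
  have hε0 : 1 + ε < α₀ := by
    have := min_le_left ((α₀ - 1) / 2) ((1 - α₁) / 2); rw [← hεdef] at this; linarith
  have hε1 : α₁ < 1 - ε := by
    have := min_le_right ((α₀ - 1) / 2) ((1 - α₁) / 2); rw [← hεdef] at this; linarith
  have hεlt1 : ε < 1 := by
    have := min_le_right ((α₀ - 1) / 2) ((1 - α₁) / 2); rw [← hεdef] at this; linarith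
  set g : S → ℝ := fun t =>
    2 * (p t * |Real.log (p t)|) + p t ^ α₀ / (α₀ - (1 + ε)) + p t ^ α₁ / (1 - ε - α₁)
    with hgdef
  have hg_int : Integrable g ν :=
    (((hlog.const_mul 2).add (hint0.div_const _)).add (hint1.div_const _))
  set F : ℝ → S → ℝ := fun α t => (p t ^ α - p t) / (α - 1) with hFdef
  set L := nhdsWithin (1 : ℝ) {(1 : ℝ)}ᶜ with hLdef
  have hev : ∀ᶠ α : ℝ in L, |α - 1| ≤ ε ∧ α ≠ 1 := by
    have h1 : ∀ᶠ α : ℝ in L, |α - 1| ≤ ε :=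
      eventually_nhdsWithin_of_eventually_nhds
        ((eventually_abs_sub_lt 1 hε).mono fun _ h => h.le)
    have h2 : ∀ᶠ α : ℝ in L, α ≠ 1 := by
      filter_upwards [self_mem_nhdsWithin] with α hα
      exact hα
    exact h1.and h2
  have hFmeas : ∀ α : ℝ, AEStronglyMeasurable (F α) ν := by
    intro α
    have : Measurable (F α) := by
      apply Measurable.div_const
      exact Measurable.sub (by fun_prop) hp_meas
    exact this.aestronglyMeasurable
  have hbound : ∀ α : ℝ, |α - 1| ≤ ε → α ≠ 1 → ∀ t, ‖F α t‖ ≤ g t := by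
    intro α hαε hα1 t
    have h1 : |α - 1| > 0 := abs_pos.mpr (sub_ne_zero.mpr hα1)
    have key := aux_key (hp_nonneg t) hε hε0 hα₁ hε1 hαε
    rw [hFdef]
    simp only [Real.norm_eq_abs, abs_div]
    rw [div_le_iff₀ h1]
    calc |p t ^ α - p t| ≤ |α - 1| * g t := key
      _ = g t * |α - 1| := mul_comm _ _
  have htend : Tendsto (fun α => ∫ t, F α t ∂ν) L
      (nhds (∫ t, p t * Real.log (p t) ∂ν)) := by
    apply tendsto_integral_filter_of_dominated_convergence g
    · exact Eventually.of_forall hFmeas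
    · filter_upwards [hev] with α ⟨hαε, hα1⟩
      exact ae_of_all _ (hbound α hαε hα1)
    · exact hg_int
    · exact ae_of_all _ fun t => aux_ptwise (hp_nonneg t)
  have hFint : ∀ α : ℝ, |α - 1| ≤ ε → α ≠ 1 →
      Integrable (fun t => p t ^ α - p t) ν := by
    intro α hαε hα1
    apply Integrable.mono' (hg_int.const_mul |α - 1|)
      ((Measurable.sub (by fun_prop) hp_meas).aestronglyMeasurable)
    exact ae_of_all _ fun t => aux_key (hp_nonneg t) hε hε0 hα₁ hε1 hαε
  have heq : ∀ᶠ α : ℝ in L,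
      α⁻¹ * ∫ t, F α t ∂ν = (1 / (α * (α - 1))) * ((∫ t, p t ^ α ∂ν) - 1) := by
    filter_upwards [hev] with α ⟨hαε, hα1⟩
    have hα0 : α ≠ 0 := by
      have := abs_le.mp hαε
      have : 1 - ε ≤ α := by linarith [this.1]
      intro h; rw [h] at this; linarith
    have hα1' : α - 1 ≠ 0 := sub_ne_zero.mpr hα1
    have hpα_int : Integrable (fun t => p t ^ α) ν := by
      have h := (hFint α hαε hα1).add hp_int
      exact h.congr (ae_of_all _ fun t => by simp)
    have hIF : ∫ t, F α t ∂ν = ((∫ t, p t ^ α ∂ν) - 1) / (α - 1) := by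
      rw [hFdef]
      simp only
      rw [integral_div, integral_sub hpα_int hp_int, hp_one]
    rw [hIF]
    field_simp
  have hinv : Tendsto (fun α : ℝ => α⁻¹) L (nhds 1) := by
    have h1 : Tendsto (fun α : ℝ => α) L (nhds 1) :=
      (continuousAt_id.tendsto).mono_left nhdsWithin_le_nhds
    have := h1.inv₀ one_ne_zero
    simpa using this
  have := hinv.mul htend
  rw [one_mul] at this
  exact this.congr' heq
end

section
/- Let ν be a measure on a measurable space S and f : S → ℝ measurable with Z := ∫_S exp(f) dν ∈ (0, ∞), and define the Boltzmann–Gibbs density q(t) = exp(f(t))/Z. Then for every probability density p with respect to ν such that ∫_S p f dν and ∫_S p log p dν are finite, one has ∫_S p f dν − ∫_S p log p dν ≤ log Z, with equality if and only if p = q ν-almost everywhere. -/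
open Filter Real MeasureTheory

/-- The free-energy variational principle: the Boltzmann–Gibbs density `q = exp f / Z`
maximizes `∫ p f − ∫ p log p`, whose maximum value is `log Z`, with equality
iff `p = q` ν-almost everywhere. -/
theorem stmt_2 {S : Type*} [MeasurableSpace S] (ν : Measure S) (f : S → ℝ)
    (hf : Measurable f)
    (hexp_int : Integrable (fun t => Real.exp (f t)) ν)
    (Z : ℝ) (hZ : Z = ∫ t, Real.exp (f t) ∂ν) (hZpos : 0 < Z)
    (q : S → ℝ) (hq : ∀ t, q t = Real.exp (f t) / Z)
    (p : S → ℝ) (hp_meas : Measurable p) (hp_nonneg : ∀ t, 0 ≤ p t)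
    (hp_int : Integrable p ν) (hp_one : ∫ t, p t ∂ν = 1)
    (hpf : Integrable (fun t => p t * f t) ν)
    (hplog : Integrable (fun t => p t * Real.log (p t)) ν) :
    (∫ t, p t * f t ∂ν) - (∫ t, p t * Real.log (p t) ∂ν) ≤ Real.log Z ∧
      ((∫ t, p t * f t ∂ν) - (∫ t, p t * Real.log (p t) ∂ν) = Real.log Z ↔
        p =ᵐ[ν] q) := by
  have hqpos : ∀ t, 0 < q t := fun t => by
    rw [hq]; positivity
  have hqfun : q = fun t => Real.exp (f t) / Z := funext hq
  have hq_int : Integrable q ν := by rw [hqfun]; exact hexp_int.div_const Z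
  have hq_one : ∫ t, q t ∂ν = 1 := by
    rw [hqfun, integral_div, ← hZ, div_self hZpos.ne']
  have hlogq : ∀ t, Real.log (q t) = f t - Real.log Z := fun t => by
    rw [hq, Real.log_div (Real.exp_ne_zero _) hZpos.ne', Real.log_exp]
  set g : S → ℝ := fun t =>
    (p t * Real.log (p t) - p t * Real.log (q t)) - (p t - q t) with hgdef
  have hg_nonneg : ∀ t, 0 ≤ g t := by
    intro t
    rcases eq_or_lt_of_le (hp_nonneg t) with h0 | hpos
    · simp only [hgdef, ← h0]
      simp [le_of_lt (hqpos t)]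
    · have h1 := Real.log_le_sub_one_of_pos (div_pos (hqpos t) hpos)
      rw [Real.log_div (hqpos t).ne' hpos.ne'] at h1
      have h2 := mul_le_mul_of_nonneg_left h1 hpos.le
      have h3 : p t * (q t / p t) = q t := by field_simp
      simp only [hgdef]
      nlinarith [h2, h3]
  have hg_eq : ∀ t, g t = 0 → p t = q t := by
    intro t ht
    by_contra hne
    rcases eq_or_lt_of_le (hp_nonneg t) with h0 | hpos
    · have : g t = q t := by simp [hgdef, ← h0]
      exact (hqpos t).ne' (this.symm.trans ht)
    · have hne' : q t / p t ≠ 1 := by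
        intro h
        apply hne
        field_simp at h
        linarith
      have h1 := Real.log_lt_sub_one_of_pos (div_pos (hqpos t) hpos) hne'
      rw [Real.log_div (hqpos t).ne' hpos.ne'] at h1
      have h2 := mul_lt_mul_of_pos_left h1 hpos
      have h3 : p t * (q t / p t) = q t := by field_simp
      simp only [hgdef] at ht
      nlinarith [h2, h3]
  have hplogq : Integrable (fun t => p t * Real.log (q t)) ν := by
    have : (fun t => p t * Real.log (q t))
        = fun t => p t * f t - p t * Real.log Z := by
      funext t; rw [hlogq t]; ring
    rw [this]
    exact hpf.sub (hp_int.mul_const _)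
  have hg_int : Integrable g ν :=
    (hplog.sub hplogq).sub (hp_int.sub hq_int)
  have hintlogq : ∫ t, p t * Real.log (q t) ∂ν
      = (∫ t, p t * f t ∂ν) - Real.log Z := by
    have h1 : (fun t => p t * Real.log (q t))
        = fun t => p t * f t - p t * Real.log Z := by
      funext t; rw [hlogq t]; ring
    rw [h1, integral_sub hpf (hp_int.mul_const _), integral_mul_const, hp_one,
      one_mul]
  have hintg : ∫ t, g t ∂ν
      = (∫ t, p t * Real.log (p t) ∂ν) - (∫ t, p t * f t ∂ν) + Real.log Z := by
    have hI1 : ∫ t, ((p t * Real.log (p t) - p t * Real.log (q t)) - (p t - q t)) ∂ν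
        = (∫ t, (p t * Real.log (p t) - p t * Real.log (q t)) ∂ν)
          - ∫ t, (p t - q t) ∂ν :=
      integral_sub (hplog.sub hplogq) (hp_int.sub hq_int)
    have hI2 := integral_sub hplog hplogq
    have hI3 := integral_sub hp_int hq_int
    simp only [hgdef]
    rw [hI1, hI2, hI3, hp_one, hq_one, hintlogq]
    ring
  have hge : 0 ≤ ∫ t, g t ∂ν := integral_nonneg hg_nonneg
  constructor
  · linarith [hge, hintg]
  · constructor
    · intro heq
      have hzero : ∫ t, g t ∂ν = 0 := by linarith [hintg]
      have := (integral_eq_zero_iff_of_nonneg hg_nonneg hg_int).mp hzero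
      filter_upwards [this] with t ht
      exact hg_eq t ht
    · intro hae
      have : g =ᵐ[ν] 0 := by
        filter_upwards [hae] with t ht
        simp only [hgdef, ht, Pi.zero_apply]
        ring
      have hzero : ∫ t, g t ∂ν = 0 := by
        rw [integral_congr_ae this]; simp
      linarith [hintg, hzero]
end

section
/- Let α > 1, let ν be a measure on a measurable space S, let f : S → ℝ be measurable, and let λ ∈ ℝ be such that q(t) := [(α−1)(f(t) − λ)]_+^{1/(α−1)} satisfies ∫_S q dν = 1 and ∫_S q^α dν < ∞. Then for every probability density p with respect to ν with ∫_S p^α dν < ∞ (so that ∫_S p f dν is well-defined in [−∞, ∞)), one has ∫_S p f dν − Ω_α(p) ≤ (α−1)·Ω_α(q) + λ + 1/(α−1), with equality if and only if p = q ν-almost everywhere. In particular the α-entmax density q is the unique maximizer of p ↦ ∫_S p f dν − Ω_α(p) over probability densities. -/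
/-!
Pointwise, `x ↦ x a - x ^ α / (α (α - 1))` is strictly concave on `[0, ∞)` and is maximized
exactly at `c = [(α - 1) a]₊ ^ (1 / (α - 1))`, with maximum `c ^ α / α`; for `a > 0` this is the
strict tangent-line inequality for `x ↦ x ^ α` at `c`, i.e. Bernoulli's inequality.
Applying it with `x = p t`, `a = f t - λ` and integrating against `ν` gives the bound, and since
the pointwise inequality is strict off `{p = q}`, equality of the integrals forces `p = q` a.e.
-/

open Filter Real MeasureTheory

lemma rpow_add_mul_sub_lt_rpow {α : ℝ} (hα : 1 < α) {c x : ℝ} (hc : 0 < c) (hx : 0 ≤ x)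
    (hne : x ≠ c) : c ^ α + α * c ^ (α - 1) * (x - c) < x ^ α := by
  have hs : -1 ≤ x / c - 1 := by have := div_nonneg hx hc.le; linarith
  have hs0 : x / c - 1 ≠ 0 := by
    rw [sub_ne_zero, Ne, div_eq_one_iff_eq hc.ne']; exact hne
  have bernoulli := one_add_mul_self_lt_rpow_one_add hs hs0 hα
  rw [add_sub_cancel, div_rpow hx hc.le, lt_div_iff₀ (rpow_pos_of_pos hc α)] at bernoulli
  have hcα : c ^ α = c ^ (α - 1) * c := by
    rw [← rpow_add_one hc.ne', sub_add_cancel]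
  calc c ^ α + α * c ^ (α - 1) * (x - c) = (1 + α * (x / c - 1)) * c ^ α := by
        rw [hcα]; field_simp
    _ < x ^ α := bernoulli

noncomputable def entmaxPoint (α a : ℝ) : ℝ := max ((α - 1) * a) 0 ^ (1 / (α - 1))

section entmaxPoint

variable {α : ℝ} (hα : 1 < α)
include hα

lemma entmaxPoint_of_nonpos {a : ℝ} (ha : a ≤ 0) : entmaxPoint α a = 0 := by
  have hα1 : 0 < α - 1 := sub_pos.2 hα
  rw [entmaxPoint, max_eq_right (mul_nonpos_of_nonneg_of_nonpos hα1.le ha),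
    zero_rpow (one_div_pos.2 hα1).ne']

lemma entmaxPoint_pos {a : ℝ} (ha : 0 < a) : 0 < entmaxPoint α a :=
  rpow_pos_of_pos (lt_max_of_lt_left (mul_pos (sub_pos.2 hα) ha)) _

lemma entmaxPoint_rpow_sub_one {a : ℝ} (ha : 0 < a) :
    entmaxPoint α a ^ (α - 1) = (α - 1) * a := by
  have hM : 0 < (α - 1) * a := mul_pos (sub_pos.2 hα) ha
  rw [entmaxPoint, max_eq_left hM.le, ← rpow_mul hM.le,
    one_div_mul_cancel (sub_pos.2 hα).ne', rpow_one]

lemma entmaxPoint_mul_sub_rpow_div (a : ℝ) :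
    entmaxPoint α a * a - entmaxPoint α a ^ α / (α * (α - 1)) = entmaxPoint α a ^ α / α := by
  have hα0 : 0 < α := one_pos.trans hα
  have hα1 : α - 1 ≠ 0 := (sub_pos.2 hα).ne'
  rcases le_or_gt a 0 with ha | ha
  · rw [entmaxPoint_of_nonpos hα ha, zero_rpow hα0.ne']; ring
  · have hc := entmaxPoint_pos hα ha
    have hcα : entmaxPoint α a ^ α = (α - 1) * a * entmaxPoint α a := by
      rw [← entmaxPoint_rpow_sub_one hα ha, ← rpow_add_one hc.ne', sub_add_cancel]
    rw [hcα]; field_simp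

lemma mul_sub_rpow_div_lt_entmaxPoint {a x : ℝ} (hx : 0 ≤ x) (hne : x ≠ entmaxPoint α a) :
    x * a - x ^ α / (α * (α - 1)) < entmaxPoint α a ^ α / α := by
  have hα0 : 0 < α := one_pos.trans hα
  have hα1 : 0 < α - 1 := sub_pos.2 hα
  have hK : 0 < α * (α - 1) := mul_pos hα0 hα1
  rcases le_or_gt a 0 with ha | ha
  · rw [entmaxPoint_of_nonpos hα ha] at hne ⊢
    have hxα : 0 < x ^ α / (α * (α - 1)) :=
      div_pos (rpow_pos_of_pos (lt_of_le_of_ne hx (Ne.symm hne)) α) hK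
    rw [zero_rpow hα0.ne', zero_div]
    nlinarith
  · have tangent := rpow_add_mul_sub_lt_rpow hα (entmaxPoint_pos hα ha) hx hne
    rw [entmaxPoint_rpow_sub_one hα ha] at tangent
    set c := entmaxPoint α a
    have gap : c * a - c ^ α / (α * (α - 1)) - (x * a - x ^ α / (α * (α - 1))) =
        (x ^ α - (c ^ α + α * ((α - 1) * a) * (x - c))) / (α * (α - 1)) := by
      field_simp; ring
    rw [← entmaxPoint_mul_sub_rpow_div hα a, ← sub_pos, gap]
    exact div_pos (sub_pos.2 tangent) hK

lemma mul_sub_rpow_div_le_entmaxPoint (a : ℝ) {x : ℝ} (hx : 0 ≤ x) :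
    x * a - x ^ α / (α * (α - 1)) ≤ entmaxPoint α a ^ α / α := by
  rcases eq_or_ne x (entmaxPoint α a) with rfl | hne
  · exact (entmaxPoint_mul_sub_rpow_div hα a).le
  · exact (mul_sub_rpow_div_lt_entmaxPoint hα hx hne).le

lemma mul_sub_rpow_div_eq_entmaxPoint_iff (a : ℝ) {x : ℝ} (hx : 0 ≤ x) :
    x * a - x ^ α / (α * (α - 1)) = entmaxPoint α a ^ α / α ↔ x = entmaxPoint α a := by
  refine ⟨fun h => ?_, fun h => h ▸ entmaxPoint_mul_sub_rpow_div hα a⟩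
  by_contra hne
  exact (mul_sub_rpow_div_lt_entmaxPoint hα hx hne).ne h

end entmaxPoint

theorem stmt_3_general {S : Type*} [MeasurableSpace S] (ν : Measure S)
    (α : ℝ) (hα : 1 < α) (f : S → ℝ) (lam : ℝ)
    (q : S → ℝ) (hq : ∀ t, q t = max ((α - 1) * (f t - lam)) 0 ^ (1 / (α - 1)))
    (hqα : Integrable (fun t => q t ^ α) ν)
    (p : S → ℝ) (hp_nonneg : ∀ t, 0 ≤ p t)
    (hp_int : Integrable p ν) (hp_one : ∫ t, p t ∂ν = 1)
    (hpα : Integrable (fun t => p t ^ α) ν)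
    (hpf : Integrable (fun t => p t * f t) ν) :
    (∫ t, p t * f t ∂ν) - (1 / (α * (α - 1))) * ((∫ t, p t ^ α ∂ν) - 1) ≤
        (α - 1) * ((1 / (α * (α - 1))) * ((∫ t, q t ^ α ∂ν) - 1)) + lam + 1 / (α - 1) ∧
      ((∫ t, p t * f t ∂ν) - (1 / (α * (α - 1))) * ((∫ t, p t ^ α ∂ν) - 1) =
          (α - 1) * ((1 / (α * (α - 1))) * ((∫ t, q t ^ α ∂ν) - 1)) + lam + 1 / (α - 1) ↔
        p =ᵐ[ν] q) := by
  have hq' : ∀ t, q t = entmaxPoint α (f t - lam) := hq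
  have hpf_lam : Integrable (fun t => p t * f t - lam * p t) ν := hpf.sub (hp_int.const_mul lam)
  set G : S → ℝ := fun t => p t * f t - lam * p t - p t ^ α / (α * (α - 1))
  have hG : ∀ t, G t = p t * (f t - lam) - p t ^ α / (α * (α - 1)) := fun t => by
    simp only [G]; ring
  have hG_int : Integrable G ν := hpf_lam.sub (hpα.div_const _)
  have hH_int : Integrable (fun t => q t ^ α / α) ν := hqα.div_const α
  have hGH : ∀ t, G t ≤ q t ^ α / α := fun t => by
    rw [hG, hq']; exact mul_sub_rpow_div_le_entmaxPoint hα _ (hp_nonneg t)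
  have hGH_ae : G =ᵐ[ν] (fun t => q t ^ α / α) ↔ p =ᵐ[ν] q :=
    eventually_congr <| Eventually.of_forall fun t => by
      dsimp only; rw [hG, hq']; exact mul_sub_rpow_div_eq_entmaxPoint_iff hα _ (hp_nonneg t)
  have hLHS : (∫ t, p t * f t ∂ν) - (1 / (α * (α - 1))) * ((∫ t, p t ^ α ∂ν) - 1) =
      ∫ t, G t ∂ν + lam + 1 / (α * (α - 1)) := by
    simp only [G]
    rw [integral_sub hpf_lam (hpα.div_const _),
      integral_sub hpf (hp_int.const_mul lam), integral_const_mul, integral_div, hp_one]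
    ring
  have hRHS : (α - 1) * ((1 / (α * (α - 1))) * ((∫ t, q t ^ α ∂ν) - 1)) + lam + 1 / (α - 1) =
      ∫ t, q t ^ α / α ∂ν + lam + 1 / (α * (α - 1)) := by
    have hα1 : α - 1 ≠ 0 := (sub_pos.2 hα).ne'
    rw [integral_div]; field_simp; ring
  rw [hLHS, hRHS, add_left_inj, add_left_inj, add_le_add_iff_right, add_le_add_iff_right]
  exact ⟨integral_mono hG_int hH_int hGH,
    (integral_eq_iff_of_ae_le hG_int hH_int (Eventually.of_forall hGH)).trans hGH_ae⟩

/-- The α-entmax density `q(t) = [(α−1)(f(t) − λ)]₊^(1/(α−1))` is the unique maximizer of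
`p ↦ ∫ p f − Ω_α(p)` over probability densities, where
`Ω_α(p) = (1/(α(α−1)))(∫ p^α − 1)`; the maximum value is
`(α−1) Ω_α(q) + λ + 1/(α−1)`, with equality iff `p = q` ν-a.e. -/
theorem stmt_3 {S : Type*} [MeasurableSpace S] (ν : Measure S)
    (α : ℝ) (hα : 1 < α) (f : S → ℝ) (hf : Measurable f) (lam : ℝ)
    (q : S → ℝ) (hq : ∀ t, q t = max ((α - 1) * (f t - lam)) 0 ^ (1 / (α - 1)))
    (hq_int : Integrable q ν) (hq_one : ∫ t, q t ∂ν = 1)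
    (hqα : Integrable (fun t => q t ^ α) ν)
    (p : S → ℝ) (hp_meas : Measurable p) (hp_nonneg : ∀ t, 0 ≤ p t)
    (hp_int : Integrable p ν) (hp_one : ∫ t, p t ∂ν = 1)
    (hpα : Integrable (fun t => p t ^ α) ν)
    (hpf : Integrable (fun t => p t * f t) ν) :
    (∫ t, p t * f t ∂ν) - (1 / (α * (α - 1))) * ((∫ t, p t ^ α ∂ν) - 1) ≤
        (α - 1) * ((1 / (α * (α - 1))) * ((∫ t, q t ^ α ∂ν) - 1)) + lam + 1 / (α - 1) ∧
      ((∫ t, p t * f t ∂ν) - (1 / (α * (α - 1))) * ((∫ t, p t ^ α ∂ν) - 1) =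
          (α - 1) * ((1 / (α * (α - 1))) * ((∫ t, q t ^ α ∂ν) - 1)) + lam + 1 / (α - 1) ↔
        p =ᵐ[ν] q) :=
  stmt_3_general ν α hα f lam q hq hqα p hp_nonneg hp_int hp_one hpα hpf
end

section
/- Let α ∈ (1,2], let ν be a measure on S, let f : S → ℝ be measurable and A ∈ ℝ, and define p(t) = [1 + (α−1)(f(t) − A)]_+^{1/(α−1)}. Assume ∫_S p dν = 1, that 0 < ∫_{{p>0}} p^{2−α} dν < ∞, and that p^{2−α} f is ν-integrable on {p > 0}. Then A = (1/(1−α) + ∫_{{p>0}} p^{2−α} f dν) / (∫_{{p>0}} p^{2−α} dν) − 1/(1−α). -/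
open Filter Real MeasureTheory

/-- Characterization of the normalizing constant `A` of the `(2−α)`-exponential density
`p(t) = [1 + (α−1)(f(t) − A)]₊^(1/(α−1))`:
`A = (1/(1−α) + ∫_{p>0} p^(2−α) f) / (∫_{p>0} p^(2−α)) − 1/(1−α)`. -/
theorem stmt_4 {S : Type*} [MeasurableSpace S] (ν : Measure S)
    (α : ℝ) (hα1 : 1 < α) (hα2 : α ≤ 2)
    (f : S → ℝ) (hf : Measurable f) (A : ℝ)
    (p : S → ℝ) (hp : ∀ t, p t = max (1 + (α - 1) * (f t - A)) 0 ^ (1 / (α - 1)))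
    (hp_one : ∫ t, p t ∂ν = 1)
    (hint : IntegrableOn (fun t => p t ^ (2 - α)) {t | 0 < p t} ν)
    (hpos : 0 < ∫ t in {t | 0 < p t}, p t ^ (2 - α) ∂ν)
    (hintf : IntegrableOn (fun t => p t ^ (2 - α) * f t) {t | 0 < p t} ν) :
    A = (1 / (1 - α) + ∫ t in {t | 0 < p t}, p t ^ (2 - α) * f t ∂ν) /
          (∫ t in {t | 0 < p t}, p t ^ (2 - α) ∂ν) - 1 / (1 - α) := by
  have hα : α - 1 ≠ 0 := by linarith
  set s : Set S := {t | 0 < p t} with hs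
  set I := ∫ t in s, p t ^ (2 - α) ∂ν with hI
  set J := ∫ t in s, p t ^ (2 - α) * f t ∂ν with hJ
  have hpm : Measurable p := by
    have he : p = fun t => max (1 + (α - 1) * (f t - A)) 0 ^ (1 / (α - 1)) := funext hp
    rw [he]
    fun_prop
  have hsm : MeasurableSet s := measurableSet_lt measurable_const hpm
  have hpnn : ∀ t, 0 ≤ p t := fun t => by
    rw [hp t]; exact rpow_nonneg (le_max_right _ _) _
  have h1 : ∫ t in s, p t ∂ν = 1 := by
    rw [← hp_one]
    apply setIntegral_eq_integral_of_forall_compl_eq_zero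
    intro t ht
    simp only [hs, Set.mem_setOf_eq, not_lt] at ht
    linarith [hpnn t]
  have hkey : ∀ t ∈ s, p t = p t ^ (2 - α) * (1 + (α - 1) * (f t - A)) := by
    intro t ht
    have htp : 0 < p t := ht
    set b := max (1 + (α - 1) * (f t - A)) 0 with hb
    have hbpos : 0 < b := by
      by_contra h
      have hb0 : b = 0 := le_antisymm (not_lt.mp h) (le_max_right _ _)
      rw [hp t, ← hb, hb0, zero_rpow (by positivity : 1 / (α - 1) ≠ 0)] at htp
      exact lt_irrefl 0 htp
    have hbval : b = 1 + (α - 1) * (f t - A) := by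
      rcases max_cases (1 + (α - 1) * (f t - A)) 0 with ⟨h1, _⟩ | ⟨h1, _⟩
      · exact h1
      · rw [← hb] at h1; linarith [h1 ▸ hbpos]
    have hpt : p t = b ^ (1 / (α - 1)) := by rw [hp t]
    rw [hpt, ← hbval]
    rw [← rpow_mul hbpos.le]
    calc b ^ (1 / (α - 1)) = b ^ ((1 / (α - 1)) * (2 - α) + 1) := by
          congr 1; field_simp; ring
      _ = b ^ ((1 / (α - 1)) * (2 - α)) * b := by
          rw [rpow_add hbpos, rpow_one]
  have h2 : (1 : ℝ) = I + (α - 1) * J - (α - 1) * A * I := by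
    have heq : ∫ t in s, p t ∂ν
        = ∫ t in s, (p t ^ (2 - α) + (α - 1) * (p t ^ (2 - α) * f t)
            - ((α - 1) * A) * p t ^ (2 - α)) ∂ν := by
      apply setIntegral_congr_fun hsm
      intro t ht
      rw [hkey t ht]; ring
    rw [h1] at heq
    have hi1 : IntegrableOn (fun t => p t ^ (2 - α) + (α - 1) * (p t ^ (2 - α) * f t)) s ν :=
      hint.add (hintf.const_mul _)
    have hi2 : IntegrableOn (fun t => ((α - 1) * A) * p t ^ (2 - α)) s ν :=
      hint.const_mul _
    rw [integral_sub hi1 hi2, integral_add hint (hintf.const_mul _), integral_const_mul,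
      integral_const_mul] at heq
    rw [← hI, ← hJ] at heq
    linarith [heq]
  have hIne : I ≠ 0 := ne_of_gt hpos
  have h1α : (1 : ℝ) - α ≠ 0 := by linarith
  field_simp
  nlinarith [h2, hpos]
end

section
/- Let α ∈ (1,2], let ν be a measure on S, let φ : S → ℝ^M be measurable, let U ⊆ ℝ^M be open, and let A : U → ℝ be differentiable. For θ ∈ U define p_θ(t) = [(α−1)(θ·φ(t) − A(θ)) + 1]_+^{1/(α−1)}. Assume: (i) ∫_S p_θ dν = 1 for all θ ∈ U; (ii) for ν-almost every t, the map θ ↦ p_θ(t) is differentiable on U with gradient p_θ(t)^{2−α}(φ(t) − ∇A(θ)) (interpreted as 0 where p_θ(t) = 0); (iii) for some θ₀ ∈ U there are a ball B ⊆ U around θ₀ and a ν-integrable function g with ‖p_θ(t)^{2−α}(φ(t) − ∇A(θ))‖ ≤ g(t) for all θ ∈ B and ν-a.e. t; (iv) 0 < ∫_{{p_{θ₀}>0}} p_{θ₀}^{2−α} dν < ∞ and p_{θ₀}^{2−α}‖φ‖ is ν-integrable. Then ∇A(θ₀) = (∫_{{p_{θ₀}>0}} p_{θ₀}^{2−α}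 φ dν) / (∫_{{p_{θ₀}>0}} p_{θ₀}^{2−α} dν), i.e. the gradient of the normalizing function is the expectation of φ under the (2−α)-escort distribution of p_{θ₀}. -/
open Filter Real MeasureTheory Topology
open scoped RealInnerProductSpace

/-!
For `1 < α ≤ 2` the deformed exponential `exp_{2-α}(u) = [1 + (α - 1) u]₊ ^ (1 / (α - 1))` is
convex with derivative `exp_{2-α}(u) ^ (2 - α)`, so each `p_θ(t)` lies above its tangent at `θ₀`:
`p_θ(t) - p_{θ₀}(t) ≥ w(t) (⟪θ - θ₀, φ t⟫ - (A θ - A θ₀))` with `w = p_{θ₀} ^ (2 - α)` on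
`{p_{θ₀} > 0}`. Integrating along `θ = θ₀ + s v`, the left side vanishes because every `p_θ` has
mass one; dividing by `s > 0` and letting `s → 0` gives `⟪v, ∫ w φ⟫ ≤ ⟪∇A(θ₀), v⟫ ∫ w` for every
`v`, and `v = ∫ w φ - (∫ w) ∇A(θ₀)` turns this into equality.
-/

lemma mul_rpow_sub_one_mul_sub_le_rpow_sub_rpow {β : ℝ} (hβ : 1 ≤ β) {x y : ℝ} (hx : 0 < x)
    (hy : 0 ≤ y) :
    β * x ^ (β - 1) * (y - x) ≤ y ^ β - x ^ β := by
  have hyx : 0 ≤ y / x := div_nonneg hy hx.le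
  have hbern := one_add_mul_self_le_rpow_one_add (show -1 ≤ y / x - 1 by linarith) hβ
  rw [add_sub_cancel] at hbern
  have hxβ : x ^ β = x ^ (β - 1) * x := by rw [rpow_sub_one hx.ne', div_mul_cancel₀ _ hx.ne']
  calc β * x ^ (β - 1) * (y - x) = x ^ β * (1 + β * (y / x - 1)) - x ^ β := by
        rw [hxβ]; field_simp; ring
    _ ≤ x ^ β * (y / x) ^ β - x ^ β := by gcongr
    _ = y ^ β - x ^ β := by rw [← mul_rpow hx.le hyx, mul_div_cancel₀ _ hx.ne']

/-- The deformed exponential `exp_{2-α}`. -/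
noncomputable def sparseExp (α u : ℝ) : ℝ := max ((α - 1) * u + 1) 0 ^ (1 / (α - 1))

/-- Convexity of `exp_{2-α}`, whose derivative is `exp_{2-α} ^ (2 - α)`; the indicator makes it `0`
off the support, where for `α = 2` the power would give `0 ^ 0 = 1`. -/
lemma indicator_rpow_mul_le_sparseExp_sub {α : ℝ} (hα1 : 1 < α) (hα2 : α ≤ 2) (u v : ℝ) :
    {x | 0 < x}.indicator (fun x => x ^ (2 - α)) (sparseExp α u) * (v - u) ≤
      sparseExp α v - sparseExp α u := by
  set β := 1 / (α - 1) with hβ_def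
  have hα1' : 0 < α - 1 := by linarith
  have hβ : 1 ≤ β := by rw [hβ_def, le_div_iff₀ hα1']; linarith
  have hβα : β * (α - 1) = 1 := by rw [hβ_def]; field_simp
  have hy : 0 ≤ max ((α - 1) * v + 1) 0 := le_max_right _ _
  have hv : 0 ≤ sparseExp α v := rpow_nonneg hy _
  by_cases hu : 0 < (α - 1) * u + 1
  · set x := (α - 1) * u + 1
    have hux : sparseExp α u = x ^ β := by rw [sparseExp, max_eq_left hu.le]
    have hweight : (x ^ β) ^ (2 - α) = x ^ (β - 1) := by
      rw [← rpow_mul hu.le]; congr 1; linear_combination -hβα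
    rw [hux, Set.indicator_of_mem (show x ^ β ∈ {x : ℝ | 0 < x} from rpow_pos_of_pos hu β),
      hweight]
    calc x ^ (β - 1) * (v - u) = β * x ^ (β - 1) * ((α - 1) * v + 1 - x) := by
          linear_combination (-(x ^ (β - 1) * (v - u))) * hβα
      _ ≤ β * x ^ (β - 1) * (max ((α - 1) * v + 1) 0 - x) := by
          gcongr
          exact le_max_left _ _
      _ ≤ max ((α - 1) * v + 1) 0 ^ β - x ^ β :=
          mul_rpow_sub_one_mul_sub_le_rpow_sub_rpow hβ hu hy
  · have hu0 : sparseExp α u = 0 := by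
      rw [sparseExp, max_eq_right (not_lt.1 hu), zero_rpow (by positivity)]
    rw [hu0, Set.indicator_of_notMem (show (0 : ℝ) ∉ {x : ℝ | 0 < x} by simp), zero_mul,
      sub_zero]
    exact hv

lemma measurable_sparseExp (α : ℝ) : Measurable (sparseExp α) :=
  ((measurable_id.const_mul _).add_const _ |>.max measurable_const).pow_const _

lemma integral_mul_le_mul_integral_of_tangent {S : Type*} [MeasurableSpace S] {ν : Measure S}
    {q : ℝ → S → ℝ} {w a : S → ℝ} {f : ℝ → ℝ} {L : ℝ}
    (hf : HasDerivWithinAt f L (Set.Ioi 0) 0)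
    (hq : ∀ᶠ s in 𝓝[>] 0, Integrable (q s) ν ∧ ∫ t, q s t ∂ν = ∫ t, q 0 t ∂ν)
    (hq0 : Integrable (q 0) ν) (hw : Integrable w ν) (hwa : Integrable (fun t => w t * a t) ν)
    (htangent : ∀ s > 0, ∀ t, w t * (s * a t - (f s - f 0)) ≤ q s t - q 0 t) :
    ∫ t, w t * a t ∂ν ≤ L * ∫ t, w t ∂ν := by
  have hslope : Tendsto (slope f 0) (𝓝[>] 0) (𝓝 L) := by
    simpa using hasDerivWithinAt_iff_tendsto_slope.1 hf
  have hlim := (tendsto_const_nhds (x := ∫ t, w t * a t ∂ν)).sub (hslope.mul_const (∫ t, w t ∂ν))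
  suffices ∀ᶠ s in 𝓝[>] 0, ∫ t, w t * a t ∂ν - slope f 0 s * ∫ t, w t ∂ν ≤ 0 by
    linarith [le_of_tendsto hlim this]
  filter_upwards [hq, self_mem_nhdsWithin] with s ⟨hqs, hqs_int⟩ (hs : 0 < s)
  have hs_slope : s * slope f 0 s = f s - f 0 := by
    rw [slope_def_field, sub_zero]; field_simp
  have hmass : ∫ t, w t * (s * a t - (f s - f 0)) ∂ν =
      s * (∫ t, w t * a t ∂ν - slope f 0 s * ∫ t, w t ∂ν) := calc
    _ = ∫ t, (s * (w t * a t) - (f s - f 0) * w t) ∂ν := by congr 1; ext t; ring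
    _ = s * ∫ t, w t * a t ∂ν - (f s - f 0) * ∫ t, w t ∂ν := by
      rw [integral_sub (hwa.const_mul s) (hw.const_mul _), integral_const_mul, integral_const_mul]
    _ = _ := by rw [← hs_slope]; ring
  have hle : ∫ t, w t * (s * a t - (f s - f 0)) ∂ν ≤ ∫ t, q s t - q 0 t ∂ν :=
    integral_mono ((hwa.const_mul s).sub (hw.const_mul (f s - f 0)) |>.congr
      (Eventually.of_forall fun t => by simp only [Pi.sub_apply]; ring)) (hqs.sub hq0)
      (htangent s hs)
  rw [integral_sub hqs hq0, hqs_int, sub_self, hmass] at hle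
  exact nonpos_of_mul_nonpos_right hle hs

section SparseFamily

variable {S H : Type*} [NormedAddCommGroup H] [InnerProductSpace ℝ H] {α : ℝ} {φ : S → H}
  {A : H → ℝ}

noncomputable def sparseFamily (α : ℝ) (φ : S → H) (A : H → ℝ) (θ : H) (t : S) : ℝ :=
  sparseExp α (⟪θ, φ t⟫ - A θ)

/-- The unnormalized `β`-escort density of `p`. -/
noncomputable def escortWeight (β : ℝ) (p : S → ℝ) : S → ℝ :=
  {t | 0 < p t}.indicator fun t => p t ^ β

lemma sparseFamily_nonneg (θ : H) (t : S) : 0 ≤ sparseFamily α φ A θ t :=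
  rpow_nonneg (le_max_right _ _) _

lemma escortWeight_mul_le_sparseFamily_sub (hα1 : 1 < α) (hα2 : α ≤ 2) (θ₀ θ : H) (t : S) :
    escortWeight (2 - α) (sparseFamily α φ A θ₀) t * (⟪θ - θ₀, φ t⟫ - (A θ - A θ₀)) ≤
      sparseFamily α φ A θ t - sparseFamily α φ A θ₀ t := by
  rw [inner_sub_left, show ⟪θ, φ t⟫ - ⟪θ₀, φ t⟫ - (A θ - A θ₀) =
    (⟪θ, φ t⟫ - A θ) - (⟪θ₀, φ t⟫ - A θ₀) by ring]
  exact indicator_rpow_mul_le_sparseExp_sub hα1 hα2 _ _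

variable [MeasurableSpace S] {ν : Measure S}

lemma measurable_sparseFamily [MeasurableSpace H] [OpensMeasurableSpace H] (hφ : Measurable φ)
    (θ : H) : Measurable (sparseFamily α φ A θ) :=
  (measurable_sparseExp α).comp
    (((continuous_const.inner continuous_id).measurable.comp hφ).sub_const _)

variable [CompleteSpace H]

lemma integral_escortWeight_mul_inner_le (hα1 : 1 < α) (hα2 : α ≤ 2) {U : Set H} (hU : IsOpen U)
    {θ₀ g : H} (hθ₀ : θ₀ ∈ U) (hA : HasGradientAt A g θ₀)
    (hp_one : ∀ θ ∈ U, ∫ t, sparseFamily α φ A θ t ∂ν = 1)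
    (hw : Integrable (escortWeight (2 - α) (sparseFamily α φ A θ₀)) ν) {v : H}
    (hwv : Integrable (fun t => escortWeight (2 - α) (sparseFamily α φ A θ₀) t * ⟪v, φ t⟫) ν) :
    ∫ t, escortWeight (2 - α) (sparseFamily α φ A θ₀) t * ⟪v, φ t⟫ ∂ν ≤
      ⟪g, v⟫ * ∫ t, escortWeight (2 - α) (sparseFamily α φ A θ₀) t ∂ν := by
  have hline : ∀ᶠ s in 𝓝 (0 : ℝ), θ₀ + s • v ∈ U :=
    (Continuous.tendsto' (by fun_prop) 0 θ₀ (by simp)).eventually (hU.mem_nhds hθ₀)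
  have hint : ∀ θ ∈ U, Integrable (sparseFamily α φ A θ) ν := fun θ hθ =>
    Integrable.of_integral_ne_zero (by rw [hp_one θ hθ]; exact one_ne_zero)
  have hderiv : HasDerivAt (fun s : ℝ => A (θ₀ + s • v)) ⟪g, v⟫ 0 := by
    have := hA.hasFDerivAt.comp_hasDerivAt_of_eq (0 : ℝ)
      (((hasDerivAt_id (0 : ℝ)).smul_const v).const_add θ₀) (by simp)
    simp only [id_eq, one_smul, InnerProductSpace.toDual_apply_apply] at this
    exact this
  refine integral_mul_le_mul_integral_of_tangent (q := fun s => sparseFamily α φ A (θ₀ + s • v))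
    hderiv.hasDerivWithinAt ?_ (by simpa using hint θ₀ hθ₀) hw hwv fun s _ t => ?_
  · filter_upwards [nhdsWithin_le_nhds hline] with s hs
    simp only [zero_smul, add_zero]
    exact ⟨hint _ hs, by rw [hp_one _ hs, hp_one _ hθ₀]⟩
  · simpa [inner_smul_left] using escortWeight_mul_le_sparseFamily_sub hα1 hα2 θ₀ (θ₀ + s • v) t

end SparseFamily

theorem stmt_5_general {S : Type*} [MeasurableSpace S] (ν : Measure S)
    (α : ℝ) (hα1 : 1 < α) (hα2 : α ≤ 2) (M : ℕ)
    (φ : S → EuclideanSpace ℝ (Fin M)) (hφ : Measurable φ)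
    (U : Set (EuclideanSpace ℝ (Fin M))) (hU : IsOpen U)
    (A : EuclideanSpace ℝ (Fin M) → ℝ)
    (G : EuclideanSpace ℝ (Fin M) → EuclideanSpace ℝ (Fin M))
    (hA : ∀ θ ∈ U, HasGradientAt A (G θ) θ)
    (p : EuclideanSpace ℝ (Fin M) → S → ℝ)
    (hp : ∀ θ t, p θ t = max ((α - 1) * (⟪θ, φ t⟫ - A θ) + 1) 0 ^ (1 / (α - 1)))
    (hp_one : ∀ θ ∈ U, ∫ t, p θ t ∂ν = 1)
    (θ₀ : EuclideanSpace ℝ (Fin M)) (hθ₀ : θ₀ ∈ U)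
    (hZ : IntegrableOn (fun t => p θ₀ t ^ (2 - α)) {t | 0 < p θ₀ t} ν)
    (hZpos : 0 < ∫ t in {t | 0 < p θ₀ t}, p θ₀ t ^ (2 - α) ∂ν)
    (hφint : IntegrableOn (fun t => p θ₀ t ^ (2 - α) * ‖φ t‖) {t | 0 < p θ₀ t} ν) :
    G θ₀ = (∫ t in {t | 0 < p θ₀ t}, p θ₀ t ^ (2 - α) ∂ν)⁻¹ •
      (∫ t in {t | 0 < p θ₀ t}, (p θ₀ t ^ (2 - α)) • φ t ∂ν) := by
  obtain rfl : p = sparseFamily α φ A := by ext θ t; exact hp θ t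
  set E := {t | 0 < sparseFamily α φ A θ₀ t}
  set Z := ∫ t in E, sparseFamily α φ A θ₀ t ^ (2 - α) ∂ν
  set V := ∫ t in E, sparseFamily α φ A θ₀ t ^ (2 - α) • φ t ∂ν
  have hE : MeasurableSet E := measurableSet_lt measurable_const (measurable_sparseFamily hφ θ₀)
  have hV : IntegrableOn (fun t => sparseFamily α φ A θ₀ t ^ (2 - α) • φ t) E ν :=
    hφint.mono' (((measurable_sparseFamily hφ θ₀).pow_const _).smul hφ).aestronglyMeasurable
      (Eventually.of_forall fun t => by
        rw [norm_smul, norm_of_nonneg (rpow_nonneg (sparseFamily_nonneg θ₀ t) _)])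
  have hweight_inner : ∀ v,
      (fun t => escortWeight (2 - α) (sparseFamily α φ A θ₀) t * ⟪v, φ t⟫) =
      E.indicator fun t => ⟪v, sparseFamily α φ A θ₀ t ^ (2 - α) • φ t⟫ := fun v => by
    ext t; simp only [real_inner_smul_right, Set.indicator_mul_left]; rfl
  have hnonpos : ∀ v, ⟪v, V - Z • G θ₀⟫ ≤ 0 := fun v => by
    have := integral_escortWeight_mul_inner_le hα1 hα2 hU hθ₀ (hA θ₀ hθ₀) hp_one
      ((integrable_indicator_iff hE).2 hZ)
      (hweight_inner v ▸ (integrable_indicator_iff hE).2 (hV.const_inner (𝕜 := ℝ) v))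
    rw [hweight_inner, integral_indicator hE, integral_inner hV, escortWeight,
      integral_indicator hE] at this
    rw [inner_sub_right, real_inner_smul_right, real_inner_comm (G θ₀) v]
    linarith
  rw [sub_eq_zero.1 (real_inner_self_nonpos.1 (hnonpos _)), smul_smul, inv_mul_cancel₀ hZpos.ne',
    one_smul]

/-- The gradient of the normalizing function `A` of an α-sparse family
`p_θ(t) = [(α−1)(⟨θ, φ(t)⟩ − A(θ)) + 1]₊^(1/(α−1))` is the expectation of the statistics `φ`
under the `(2−α)`-escort distribution of `p_{θ₀}`. -/
theorem stmt_5 {S : Type*} [MeasurableSpace S] (ν : Measure S)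
    (α : ℝ) (hα1 : 1 < α) (hα2 : α ≤ 2) (M : ℕ)
    (φ : S → EuclideanSpace ℝ (Fin M)) (hφ : Measurable φ)
    (U : Set (EuclideanSpace ℝ (Fin M))) (hU : IsOpen U)
    (A : EuclideanSpace ℝ (Fin M) → ℝ)
    (G : EuclideanSpace ℝ (Fin M) → EuclideanSpace ℝ (Fin M))
    (hA : ∀ θ ∈ U, HasGradientAt A (G θ) θ)
    (p : EuclideanSpace ℝ (Fin M) → S → ℝ)
    (hp : ∀ θ t, p θ t = max ((α - 1) * (⟪θ, φ t⟫ - A θ) + 1) 0 ^ (1 / (α - 1)))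
    (hp_one : ∀ θ ∈ U, ∫ t, p θ t ∂ν = 1)
    (gradp : EuclideanSpace ℝ (Fin M) → S → EuclideanSpace ℝ (Fin M))
    (hgradp : ∀ θ t, gradp θ t =
      if p θ t = 0 then 0 else (p θ t ^ (2 - α)) • (φ t - G θ))
    (hdiff : ∀ᵐ t ∂ν, ∀ θ ∈ U, HasGradientAt (fun θ' => p θ' t) (gradp θ t) θ)
    (θ₀ : EuclideanSpace ℝ (Fin M)) (hθ₀ : θ₀ ∈ U)
    (hdom : ∃ ε > 0, Metric.ball θ₀ ε ⊆ U ∧ ∃ g : S → ℝ, Integrable g ν ∧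
      ∀ θ ∈ Metric.ball θ₀ ε, ∀ᵐ t ∂ν, ‖gradp θ t‖ ≤ g t)
    (hZ : IntegrableOn (fun t => p θ₀ t ^ (2 - α)) {t | 0 < p θ₀ t} ν)
    (hZpos : 0 < ∫ t in {t | 0 < p θ₀ t}, p θ₀ t ^ (2 - α) ∂ν)
    (hφint : IntegrableOn (fun t => p θ₀ t ^ (2 - α) * ‖φ t‖) {t | 0 < p θ₀ t} ν) :
    G θ₀ = (∫ t in {t | 0 < p θ₀ t}, p θ₀ t ^ (2 - α) ∂ν)⁻¹ •
      (∫ t in {t | 0 < p θ₀ t}, (p θ₀ t ^ (2 - α)) • φ t ∂ν) :=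
  stmt_5_general ν α hα1 hα2 M φ hφ U hU A G hA p hp hp_one θ₀ hθ₀ hZ hZpos hφint
end

section
/- Let α ∈ (1,2], ν a measure on S, φ : S → ℝ^M and ψ : S → ℝ^N measurable, U ⊆ ℝ^M open, A : U → ℝ differentiable, and p_θ(t) = [(α−1)(θ·φ(t) − A(θ)) + 1]_+^{1/(α−1)} with ∫_S p_θ dν = 1 on U. Assume the hypotheses guaranteeing ∇A(θ₀) = ∫ p_{θ₀}^{2−α} φ dν / ∫ p_{θ₀}^{2−α} dν at θ₀ ∈ U (a.e. differentiability of θ ↦ p_θ(t) with gradient p_θ(t)^{2−α}(φ(t) − ∇A(θ)), integrable domination of this gradient on a ball around θ₀, and 0 < ∫_{{p_{θ₀}>0}} p_{θ₀}^{2−α} dν < ∞), and additionally that ‖ψ(t)‖·‖p_θ(t)^{2−α}(φ(t) − ∇A(θ))‖ is dominated on that ball by a ν-integrable function, with p_{θ₀}ψ, p_{θ₀}^{2−α}ψ, p_{θ₀}^{2−α}‖φ‖, and p_{θ₀}^{2−α}‖ψ‖‖φ‖ ν-integrable. Then the attention map ρ(θ) = ∫_S p_θ ψ dν is differentiable at θ₀,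 and its Jacobian J ∈ ℝ^{N×M} equals the generalized (2−α)-covariance: J = ∫_{{p_{θ₀}>0}} p_{θ₀}^{2−α} ψ φᵀ dν − (∫_{{p_{θ₀}>0}} p_{θ₀}^{2−α} ψ dν)(∫_{{p_{θ₀}>0}} p_{θ₀}^{2−α} φ dν)ᵀ / (∫_{{p_{θ₀}>0}} p_{θ₀}^{2−α} dν). -/
/-!
Differentiating `ρ(θ) = ∫ p_θ ψ dν` under the integral sign gives the Jacobian `∫ ψ (∇_θ p_θ)ᵀ dν`,
where `∇_θ p_θ = p_θ^(2-α) (φ - ∇A(θ))` on `{p_θ > 0}`. The same computation for `ψ ≡ 1`, where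
`∫ p_θ dν = 1` is constant, shows that `∇A(θ₀)` is the `p_θ₀^(2-α)`-weighted mean of `φ`;
substituting it gives the covariance.

The domination of the gradient holds for each `θ` only off a null set depending on `θ`. For
the integrand `F θ t = p_θ(t) ψ(t)` it is turned into `‖F θ t - F θ₀ t‖ ≤ g t ‖θ - θ₀‖` by
integrating the gradient along the segment `[θ₀, θ]`, after exchanging the quantifiers over `t`
and over the segment by Fubini on a σ-finite part of `ν` carrying `F θ` and `F θ₀`; dominated
convergence then needs these bounds only one `θ` at a time.
-/

open Filter Real MeasureTheory Metric Set Topology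
open scoped RealInnerProductSpace

section DifferentiationUnderIntegral

variable {S : Type*} [MeasurableSpace S] {ν : Measure S}
  {H : Type*} [NormedAddCommGroup H] [NormedSpace ℝ H]
  {E : Type*} [NormedAddCommGroup E] [NormedSpace ℝ E]

/-- Unlike `hasFDerivAt_integral_of_dominated_loc_of_lip'`, the exceptional null set of the
Lipschitz bound may depend on `x`. -/
theorem hasFDerivAt_integral_of_forall_ae_norm_sub_le {F : H → S → E} {F' : S → H →L[ℝ] E}
    {x₀ : H} {s : Set H} {bound : S → ℝ} (hs : s ∈ 𝓝 x₀)
    (hF_meas : ∀ x ∈ s, AEStronglyMeasurable (F x) ν) (hF_int : Integrable (F x₀) ν)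
    (hF'_int : Integrable F' ν)
    (h_lip : ∀ x ∈ s, ∀ᵐ t ∂ν, ‖F x t - F x₀ t‖ ≤ bound t * ‖x - x₀‖)
    (hbound : Integrable bound ν) (h_diff : ∀ᵐ t ∂ν, HasFDerivAt (F · t) (F' t) x₀) :
    HasFDerivAt (fun x => ∫ t, F x t ∂ν) (∫ t, F' t ∂ν) x₀ := by
  set Q : H → S → E := fun x t => ‖x - x₀‖⁻¹ • (F x t - F x₀ t - F' t (x - x₀))
  have hF_int' : ∀ x ∈ s, Integrable (F x) ν := fun x hx =>
    integrable_of_norm_sub_le (hF_meas x hx) hF_int (hbound.mul_const ‖x - x₀‖)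
      ((h_lip x hx).mono fun t ht => by rwa [norm_sub_rev])
  have hQ : ∀ᶠ x in 𝓝 x₀, ‖x - x₀‖⁻¹ * ‖(∫ t, F x t ∂ν) - (∫ t, F x₀ t ∂ν) -
      (∫ t, F' t ∂ν) (x - x₀)‖ = ‖∫ t, Q x t ∂ν‖ := by
    filter_upwards [hs] with x hx
    rw [integral_smul, norm_smul_of_nonneg (inv_nonneg.2 (norm_nonneg _)),
      integral_sub (f := fun t => F x t - F x₀ t) ((hF_int' x hx).sub hF_int)
        (hF'_int.apply_continuousLinearMap _),
      integral_sub (hF_int' x hx) hF_int, ContinuousLinearMap.integral_apply hF'_int]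
  rw [hasFDerivAt_iff_tendsto, tendsto_congr' hQ, ← norm_zero (E := E)]
  refine Tendsto.norm ?_
  rw [← integral_zero S E]
  refine tendsto_integral_filter_of_dominated_convergence (fun t => |bound t| + ‖F' t‖) ?_ ?_
    (hbound.abs.add hF'_int.norm) ?_
  · filter_upwards [hs] with x hx
    exact (((hF_meas x hx).sub hF_int.1).sub
      (hF'_int.1.apply_continuousLinearMap _)).const_smul _
  · filter_upwards [hs] with x hx
    filter_upwards [h_lip x hx] with t ht
    rw [norm_smul_of_nonneg (inv_nonneg.2 (norm_nonneg _))]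
    rcases eq_or_ne x x₀ with rfl | hx₀
    · simp [add_nonneg, abs_nonneg]
    have hpos : 0 < ‖x - x₀‖ := norm_pos_iff.2 (sub_ne_zero.2 hx₀)
    rw [inv_mul_le_iff₀ hpos]
    calc ‖F x t - F x₀ t - F' t (x - x₀)‖ ≤ ‖F x t - F x₀ t‖ + ‖F' t (x - x₀)‖ := norm_sub_le _ _
      _ ≤ |bound t| * ‖x - x₀‖ + ‖F' t‖ * ‖x - x₀‖ := by
        gcongr
        · exact ht.trans (mul_le_mul_of_nonneg_right (le_abs_self _) (norm_nonneg _))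
        · exact (F' t).le_opNorm _
      _ = ‖x - x₀‖ * (|bound t| + ‖F' t‖) := by ring
  · filter_upwards [h_diff] with t ht
    rw [hasFDerivAt_iff_tendsto] at ht
    exact tendsto_zero_iff_norm_tendsto_zero.2 <| ht.congr fun x => by
      rw [norm_smul_of_nonneg (inv_nonneg.2 (norm_nonneg _))]

variable [CompleteSpace E]

theorem norm_sub_le_of_forall_hasDerivAt_of_ae_norm_le {f f' : ℝ → E} {a b C : ℝ} (hab : a ≤ b)
    (hf : ∀ s ∈ Icc a b, HasDerivAt f (f' s) s)
    (hf' : ∀ᵐ s ∂volume.restrict (Icc a b), ‖f' s‖ ≤ C) :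
    ‖f b - f a‖ ≤ C * (b - a) := by
  have hmeas : AEStronglyMeasurable f' (volume.restrict (Icc a b)) :=
    (stronglyMeasurable_deriv f).aestronglyMeasurable.congr <|
      (ae_restrict_iff' measurableSet_Icc).2 <| .of_forall fun s hs => (hf s hs).deriv
  have hint : IntervalIntegrable f' volume a b := by
    rw [intervalIntegrable_iff_integrableOn_Icc_of_le hab]
    exact (integrable_const C).mono' hmeas hf'
  rw [← intervalIntegral.integral_eq_sub_of_hasDerivAt (by rwa [uIcc_of_le hab]) hint,
    ← abs_of_nonneg (sub_nonneg.2 hab)]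
  refine intervalIntegral.norm_integral_le_of_norm_le_const_ae ?_
  rw [ae_restrict_iff' measurableSet_Icc] at hf'
  filter_upwards [hf'] with s hs hsI
  exact hs (Ioc_subset_Icc_self (by rwa [uIoc_of_le hab] at hsI))

variable [MeasurableSpace H] [BorelSpace H]

theorem ae_norm_sub_le_of_forall_ae_norm_fderiv_le_of_sFinite [SFinite ν] {F : H → S → E}
    {F' : H → S → H →L[ℝ] E} {bound : S → ℝ} {x y : H}
    (hF' : Measurable fun q : H × S => ‖F' q.1 q.2‖) (hbound_meas : Measurable bound)
    (hdiff : ∀ᵐ t ∂ν, ∀ z ∈ segment ℝ x y, HasFDerivAt (F · t) (F' z t) z)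
    (hbound : ∀ z ∈ segment ℝ x y, ∀ᵐ t ∂ν, ‖F' z t‖ ≤ bound t) :
    ∀ᵐ t ∂ν, ‖F y t - F x t‖ ≤ bound t * ‖y - x‖ := by
  obtain ⟨γ, hγ_meas, hγ, hγ', hγ0, hγ1⟩ : ∃ γ : ℝ → H, Measurable γ ∧
      (∀ s ∈ Icc (0 : ℝ) 1, γ s ∈ segment ℝ x y) ∧ (∀ s, HasDerivAt γ (y - x) s) ∧
      γ 0 = x ∧ γ 1 = y :=
    ⟨AffineMap.lineMap x y, AffineMap.lineMap_continuous.measurable,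
      fun s hs => segment_eq_image_lineMap ℝ x y ▸ mem_image_of_mem _ hs,
      fun _ => AffineMap.hasDerivAt_lineMap, AffineMap.lineMap_apply_zero _ _,
      AffineMap.lineMap_apply_one _ _⟩
  have hswap : ∀ᵐ t ∂ν, ∀ᵐ s ∂volume.restrict (Icc (0 : ℝ) 1), ‖F' (γ s) t‖ ≤ bound t := by
    rw [← Measure.ae_ae_comm (p := fun s t => ‖F' (γ s) t‖ ≤ bound t)]
    · exact (ae_restrict_iff' measurableSet_Icc).2 (.of_forall fun s hs => hbound _ (hγ s hs))
    · exact measurableSet_le (hF'.comp (hγ_meas.prodMap measurable_id))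
        (hbound_meas.comp measurable_snd)
  filter_upwards [hswap, hdiff] with t hswap_t hdiff_t
  have key := norm_sub_le_of_forall_hasDerivAt_of_ae_norm_le (f := fun s => F (γ s) t)
    (f' := fun s => F' (γ s) t (y - x)) zero_le_one
    (fun s hs => (hdiff_t _ (hγ s hs)).comp_hasDerivAt s (hγ' s))
    (hswap_t.mono fun s hs => (F' (γ s) t).le_of_opNorm_le hs _)
  simpa [hγ0, hγ1] using key

theorem ae_norm_sub_le_of_forall_ae_norm_fderiv_le {F : H → S → E}
    {F' : H → S → H →L[ℝ] E} {bound : S → ℝ} {x y : H}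
    (hFx : ∃ T, SigmaFinite (ν.restrict T) ∧ ∀ᵐ t ∂ν.restrict Tᶜ, F x t = 0)
    (hFy : ∃ T, SigmaFinite (ν.restrict T) ∧ ∀ᵐ t ∂ν.restrict Tᶜ, F y t = 0)
    (hF' : Measurable fun q : H × S => ‖F' q.1 q.2‖) (hbound_meas : Measurable bound)
    (hdiff : ∀ᵐ t ∂ν, ∀ z ∈ segment ℝ x y, HasFDerivAt (F · t) (F' z t) z)
    (hbound : ∀ z ∈ segment ℝ x y, ∀ᵐ t ∂ν, ‖F' z t‖ ≤ bound t) :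
    ∀ᵐ t ∂ν, ‖F y t - F x t‖ ≤ bound t * ‖y - x‖ := by
  obtain ⟨Tx, hTx, hx⟩ := hFx
  obtain ⟨Ty, hTy, hy⟩ := hFy
  refine ae_of_ae_restrict_of_ae_restrict_compl (Tx ∪ Ty) ?_ ?_
  · exact ae_norm_sub_le_of_forall_ae_norm_fderiv_le_of_sFinite hF' hbound_meas
      (ae_restrict_of_ae hdiff) fun z hz => ae_restrict_of_ae (hbound z hz)
  · filter_upwards
      [ae_restrict_of_ae_restrict_of_subset (compl_subset_compl.2 subset_union_left) hx,
      ae_restrict_of_ae_restrict_of_subset (compl_subset_compl.2 subset_union_right) hy,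
      ae_restrict_of_ae (hbound x (left_mem_segment ℝ x y))] with t hxt hyt hbt
    rw [hxt, hyt, sub_self, norm_zero]
    exact mul_nonneg ((norm_nonneg _).trans hbt) (norm_nonneg _)

theorem hasFDerivAt_integral_of_forall_ae_norm_fderiv_le {F : H → S → E}
    {F' : H → S → H →L[ℝ] E} {x₀ : H} {ε : ℝ} {bound : S → ℝ} (hε : 0 < ε)
    (hF_meas : ∀ x ∈ ball x₀ ε, AEStronglyMeasurable (F x) ν) (hF_int : Integrable (F x₀) ν)
    (hF_supp : ∀ x ∈ ball x₀ ε, ∃ T, SigmaFinite (ν.restrict T) ∧ ∀ᵐ t ∂ν.restrict Tᶜ, F x t = 0)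
    (hF' : StronglyMeasurable (Function.uncurry F'))
    (hdiff : ∀ᵐ t ∂ν, ∀ x ∈ ball x₀ ε, HasFDerivAt (F · t) (F' x t) x)
    (hbound : ∀ x ∈ ball x₀ ε, ∀ᵐ t ∂ν, ‖F' x t‖ ≤ bound t) (hbound_int : Integrable bound ν) :
    Integrable (F' x₀) ν ∧ HasFDerivAt (fun x => ∫ t, F x t ∂ν) (∫ t, F' x₀ t ∂ν) x₀ := by
  have hx₀ : x₀ ∈ ball x₀ ε := mem_ball_self hε
  obtain ⟨b, hb_meas, hb⟩ : ∃ b : S → ℝ, Measurable b ∧ bound =ᵐ[ν] b :=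
    ⟨_, hbound_int.1.measurable_mk, hbound_int.1.ae_eq_mk⟩
  have hbound' : ∀ x ∈ ball x₀ ε, ∀ᵐ t ∂ν, ‖F' x t‖ ≤ b t := fun x hx => by
    filter_upwards [hbound x hx, hb] with t ht hbt using hbt ▸ ht
  have hF'_int : Integrable (F' x₀) ν :=
    hbound_int.mono' (hF'.comp_measurable measurable_prodMk_left).aestronglyMeasurable
      ((hbound x₀ hx₀).mono fun t ht => by simpa using ht)
  refine ⟨hF'_int, hasFDerivAt_integral_of_forall_ae_norm_sub_le (ball_mem_nhds x₀ hε) hF_meas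
    hF_int hF'_int (fun x hx => ?_) (hbound_int.congr hb) (hdiff.mono fun t ht => ht x₀ hx₀)⟩
  have hseg := (convex_ball x₀ ε).segment_subset hx₀ hx
  exact ae_norm_sub_le_of_forall_ae_norm_fderiv_le (hF_supp x₀ hx₀) (hF_supp x hx)
    hF'.norm.measurable hb_meas (hdiff.mono fun t ht z hz => ht z (hseg hz))
    fun z hz => hbound' z (hseg hz)

end DifferentiationUnderIntegral

section GradientUnderIntegral

open InnerProductSpace

variable {S : Type*} [MeasurableSpace S] {ν : Measure S}
  {V : Type*} [NormedAddCommGroup V] [InnerProductSpace ℝ V] [FiniteDimensional ℝ V]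
  [MeasurableSpace V] [BorelSpace V]
  {W : Type*} [NormedAddCommGroup W] [NormedSpace ℝ W] [CompleteSpace W]

theorem hasFDerivAt_integral_smul_of_hasGradientAt {p : V → S → ℝ} {gradp : V → S → V}
    {ψ : S → W} {x₀ : V} {ε : ℝ} {bound : S → ℝ} (hε : 0 < ε)
    (hp_meas : ∀ x, Measurable (p x)) (hp_int : ∀ x ∈ ball x₀ ε, Integrable (p x) ν)
    (hψ : StronglyMeasurable ψ) (hpψ : Integrable (fun t => p x₀ t • ψ t) ν)
    (hgradp : ∃ Γ : V × S → V, Measurable Γ ∧ ∀ x ∈ ball x₀ ε, ∀ t, Γ (x, t) = gradp x t)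
    (hdiff : ∀ᵐ t ∂ν, ∀ x ∈ ball x₀ ε, HasGradientAt (p · t) (gradp x t) x)
    (hbound : ∀ x ∈ ball x₀ ε, ∀ᵐ t ∂ν, ‖ψ t‖ * ‖gradp x t‖ ≤ bound t)
    (hbound_int : Integrable bound ν) :
    Integrable (fun t => (toDual ℝ V (gradp x₀ t)).smulRight (ψ t)) ν ∧
      HasFDerivAt (fun x => ∫ t, p x t • ψ t ∂ν)
        (∫ t, (toDual ℝ V (gradp x₀ t)).smulRight (ψ t) ∂ν) x₀ := by
  obtain ⟨Γ, hΓ_meas, hΓ⟩ := hgradp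
  have hF' : (fun t => (toDual ℝ V (gradp x₀ t)).smulRight (ψ t)) =
      fun t => (toDual ℝ V (Γ (x₀, t))).smulRight (ψ t) := by
    simp only [hΓ x₀ (mem_ball_self hε)]
  rw [hF']
  refine hasFDerivAt_integral_of_forall_ae_norm_fderiv_le
    (F' := fun x t => (toDual ℝ V (Γ (x, t))).smulRight (ψ t)) hε
    (fun x _ => (hp_meas x).aestronglyMeasurable.smul hψ.aestronglyMeasurable) hpψ
    (fun x hx => ?_) ?_ ?_ (fun x hx => ?_) hbound_int
  · obtain ⟨T, -, hT, hTσ⟩ := (hp_int x hx).aefinStronglyMeasurable.exists_set_sigmaFinite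
    exact ⟨T, hTσ, hT.mono fun t ht => by simp [show p x t = 0 from ht]⟩
  · exact isBoundedBilinearMap_smulRight.continuous.comp_stronglyMeasurable
      (((toDual ℝ V).continuous.comp_stronglyMeasurable hΓ_meas.stronglyMeasurable).prodMk
        (hψ.comp_measurable measurable_snd))
  · filter_upwards [hdiff] with t ht x hx
    rw [hΓ x hx]
    exact (ht x hx).hasFDerivAt.smul_const (ψ t)
  · filter_upwards [hbound x hx] with t ht
    rw [hΓ x hx, ContinuousLinearMap.norm_smulRight_apply, LinearIsometryEquiv.norm_map, mul_comm]
    exact ht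

end GradientUnderIntegral

section WeightedIntegrals

variable {S : Type*} [MeasurableSpace S] {ν : Measure S}
  {V : Type*} [NormedAddCommGroup V] [InnerProductSpace ℝ V]
  {W : Type*} [NormedAddCommGroup W] [NormedSpace ℝ W]
  {p : S → ℝ} {β : ℝ} {φ : S → V}

theorem integral_inner_ite_smul_eq (hp : ∀ t, 0 ≤ p t) (hp_meas : Measurable p)
    (hφ : AEStronglyMeasurable φ ν) {ψ : S → W} (hψ : AEStronglyMeasurable ψ ν) (c v : V)
    (hψφ : IntegrableOn (fun t => p t ^ β * ‖ψ t‖ * ‖φ t‖) {t | 0 < p t} ν)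
    (hψ_int : IntegrableOn (fun t => p t ^ β • ψ t) {t | 0 < p t} ν) :
    ∫ t, ⟪if p t = 0 then 0 else p t ^ β • (φ t - c), v⟫ • ψ t ∂ν =
      (∫ t in {t | 0 < p t}, (p t ^ β * ⟪φ t, v⟫) • ψ t ∂ν) -
        ⟪c, v⟫ • ∫ t in {t | 0 < p t}, p t ^ β • ψ t ∂ν := by
  have h_ind : (fun t => ⟪if p t = 0 then 0 else p t ^ β • (φ t - c), v⟫ • ψ t) =
      {t | 0 < p t}.indicator fun t => (p t ^ β * ⟪φ t, v⟫) • ψ t - ⟪c, v⟫ • p t ^ β • ψ t := by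
    ext t
    rcases (hp t).eq_or_lt with h | h
    · simp [← h]
    · simp only [h.ne', if_false, mem_ofPred_eq, h, indicator_of_mem, real_inner_smul_left,
        inner_sub_left, smul_smul, ← sub_smul]
      ring_nf
  have hψφ_int : IntegrableOn (fun t => (p t ^ β * ⟪φ t, v⟫) • ψ t) {t | 0 < p t} ν := by
    refine (hψφ.mul_const ‖v‖).mono' ((((hp_meas.pow_const β).aestronglyMeasurable.mul
      (hφ.inner aestronglyMeasurable_const)).smul hψ).restrict) (.of_forall fun t => ?_)
    rw [norm_smul, norm_mul, Real.norm_of_nonneg (rpow_nonneg (hp t) β)]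
    have hβ := rpow_nonneg (hp t) β
    calc p t ^ β * ‖⟪φ t, v⟫‖ * ‖ψ t‖ ≤ p t ^ β * (‖φ t‖ * ‖v‖) * ‖ψ t‖ := by
          gcongr; exact norm_inner_le_norm _ _
      _ = _ := by ring
  rw [h_ind, integral_indicator (measurableSet_lt measurable_const hp_meas),
    integral_sub (g := fun t => ⟪c, v⟫ • p t ^ β • ψ t) hψφ_int (hψ_int.smul _), integral_smul]

theorem inner_eq_of_integral_inner_ite_eq_zero [CompleteSpace V] (hp : ∀ t, 0 ≤ p t)
    (hp_meas : Measurable p) (hφ : AEStronglyMeasurable φ ν) {c v : V}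
    (hZ : IntegrableOn (fun t => p t ^ β) {t | 0 < p t} ν)
    (hZ_ne : ∫ t in {t | 0 < p t}, p t ^ β ∂ν ≠ 0)
    (hφ_int : IntegrableOn (fun t => p t ^ β * ‖φ t‖) {t | 0 < p t} ν)
    (h : ∫ t, ⟪if p t = 0 then 0 else p t ^ β • (φ t - c), v⟫ ∂ν = 0) :
    ⟪c, v⟫ = (∫ t in {t | 0 < p t}, p t ^ β ∂ν)⁻¹ *
      ⟪∫ t in {t | 0 < p t}, p t ^ β • φ t ∂ν, v⟫ := by
  have key := integral_inner_ite_smul_eq (ψ := fun _ => (1 : ℝ)) hp hp_meas hφ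
    aestronglyMeasurable_const c v (by simpa using hφ_int) (by simpa using hZ)
  have hφ_int' : IntegrableOn (fun t => p t ^ β • φ t) {t | 0 < p t} ν :=
    (integrable_norm_iff (((hp_meas.pow_const β).aestronglyMeasurable.smul hφ).restrict)).1 <|
      hφ_int.congr_fun (fun t _ => by
        show _ = ‖p t ^ β • φ t‖
        rw [norm_smul, Real.norm_of_nonneg (rpow_nonneg (hp t) β)])
        (measurableSet_lt measurable_const hp_meas)
  have h_inner : ∫ t in {t | 0 < p t}, p t ^ β * ⟪φ t, v⟫ ∂ν =
      ⟪∫ t in {t | 0 < p t}, p t ^ β • φ t ∂ν, v⟫ := by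
    rw [real_inner_comm, ← integral_inner hφ_int']
    simp only [real_inner_smul_right, real_inner_comm]
  simp only [smul_eq_mul, mul_one, h, h_inner] at key
  field_simp
  linarith

end WeightedIntegrals

section Entmax

open InnerProductSpace

variable {S : Type*} {V : Type*} [NormedAddCommGroup V] [InnerProductSpace ℝ V]

noncomputable def entmaxDensity (α : ℝ) (φ : S → V) (A : V → ℝ) (θ : V) (t : S) : ℝ :=
  max ((α - 1) * (⟪θ, φ t⟫ - A θ) + 1) 0 ^ (1 / (α - 1))

noncomputable def entmaxGrad (α : ℝ) (φ : S → V) (A : V → ℝ) (G : V → V) (θ : V) (t : S) : V :=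
  if entmaxDensity α φ A θ t = 0 then 0 else entmaxDensity α φ A θ t ^ (2 - α) • (φ t - G θ)

theorem entmaxDensity_nonneg (α : ℝ) (φ : S → V) (A : V → ℝ) (θ : V) (t : S) :
    0 ≤ entmaxDensity α φ A θ t :=
  rpow_nonneg (le_max_right _ _) _

variable [MeasurableSpace S] [FiniteDimensional ℝ V] [MeasurableSpace V] [BorelSpace V]

theorem measurable_entmaxDensity_uncurry {α : ℝ} {φ : S → V} (hφ : Measurable φ) {A : V → ℝ}
    (hA : Measurable A) : Measurable fun q : V × S => entmaxDensity α φ A q.1 q.2 :=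
  (((((measurable_fst.inner (hφ.comp measurable_snd)).sub (hA.comp measurable_fst)).const_mul
    (α - 1)).add_const 1).max measurable_const).pow_const _

theorem measurable_entmaxDensity (α : ℝ) {φ : S → V} (hφ : Measurable φ) (A : V → ℝ) (θ : V) :
    Measurable (entmaxDensity α φ A θ) :=
  (measurable_entmaxDensity_uncurry (A := fun _ => A θ) hφ measurable_const).comp
    measurable_prodMk_left

theorem exists_measurable_eq_entmaxGrad {α : ℝ} {φ : S → V} (hφ : Measurable φ)
    {U : Set V} (hU : IsOpen U) {A : V → ℝ} {G : V → V}
    (hA : ∀ θ ∈ U, HasGradientAt A (G θ) θ) :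
    ∃ Γ : V × S → V, Measurable Γ ∧ ∀ θ ∈ U, ∀ t, Γ (θ, t) = entmaxGrad α φ A G θ t := by
  have := Classical.decPred (· ∈ U)
  set A₁ : V → ℝ := U.piecewise A 0
  have hA₁ : Measurable A₁ := ContinuousOn.measurable_piecewise
    (fun θ hθ => (hA θ hθ).differentiableAt.continuousAt.continuousWithinAt)
    continuousOn_const hU.measurableSet
  set G₁ : V → V := fun θ => (toDual ℝ V).symm (fderiv ℝ A θ)
  have hG₁ : Measurable G₁ :=
    (toDual ℝ V).symm.continuous.measurable.comp (measurable_fderiv ℝ A)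
  set P : V × S → ℝ := fun q => entmaxDensity α φ A₁ q.1 q.2
  have hP : Measurable P := measurable_entmaxDensity_uncurry hφ hA₁
  refine ⟨fun q => if P q = 0 then 0 else P q ^ (2 - α) • (φ q.2 - G₁ q.1),
    Measurable.ite (hP (measurableSet_singleton 0)) measurable_const
      ((hP.pow_const (2 - α)).smul ((hφ.comp measurable_snd).sub (hG₁.comp measurable_fst))),
    fun θ hθ t => ?_⟩
  have hA_eq : A₁ θ = A θ := U.piecewise_eq_of_mem A 0 hθ
  have hG_eq : G₁ θ = G θ := by
    simp only [G₁, (hA θ hθ).hasFDerivAt.fderiv, LinearIsometryEquiv.symm_apply_apply]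
  have hP_eq : P (θ, t) = entmaxDensity α φ A θ t := by simp only [P, entmaxDensity, hA_eq]
  simp only [hP_eq, hG_eq, entmaxGrad]

end Entmax

theorem stmt_7_general {S : Type*} [MeasurableSpace S] (ν : Measure S)
    (α : ℝ) (M N : ℕ)
    (φ : S → EuclideanSpace ℝ (Fin M)) (hφ : Measurable φ)
    (ψ : S → EuclideanSpace ℝ (Fin N)) (hψ : Measurable ψ)
    (U : Set (EuclideanSpace ℝ (Fin M))) (hU : IsOpen U)
    (A : EuclideanSpace ℝ (Fin M) → ℝ)
    (G : EuclideanSpace ℝ (Fin M) → EuclideanSpace ℝ (Fin M))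
    (hA : ∀ θ ∈ U, HasGradientAt A (G θ) θ)
    (p : EuclideanSpace ℝ (Fin M) → S → ℝ)
    (hp : ∀ θ t, p θ t = max ((α - 1) * (⟪θ, φ t⟫ - A θ) + 1) 0 ^ (1 / (α - 1)))
    (hp_one : ∀ θ ∈ U, ∫ t, p θ t ∂ν = 1)
    (gradp : EuclideanSpace ℝ (Fin M) → S → EuclideanSpace ℝ (Fin M))
    (hgradp : ∀ θ t, gradp θ t =
      if p θ t = 0 then 0 else (p θ t ^ (2 - α)) • (φ t - G θ))
    (hdiff : ∀ᵐ t ∂ν, ∀ θ ∈ U, HasGradientAt (fun θ' => p θ' t) (gradp θ t) θ)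
    (θ₀ : EuclideanSpace ℝ (Fin M))
    (hdom : ∃ ε > 0, Metric.ball θ₀ ε ⊆ U ∧
      ∃ g g' : S → ℝ, Integrable g ν ∧ Integrable g' ν ∧
        ∀ θ ∈ Metric.ball θ₀ ε, ∀ᵐ t ∂ν,
          ‖gradp θ t‖ ≤ g t ∧ ‖ψ t‖ * ‖gradp θ t‖ ≤ g' t)
    (hZ : IntegrableOn (fun t => p θ₀ t ^ (2 - α)) {t | 0 < p θ₀ t} ν)
    (hZpos : 0 < ∫ t in {t | 0 < p θ₀ t}, p θ₀ t ^ (2 - α) ∂ν)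
    (hpψ : Integrable (fun t => p θ₀ t • ψ t) ν)
    (hψesc : IntegrableOn (fun t => (p θ₀ t ^ (2 - α)) • ψ t) {t | 0 < p θ₀ t} ν)
    (hφesc : IntegrableOn (fun t => p θ₀ t ^ (2 - α) * ‖φ t‖) {t | 0 < p θ₀ t} ν)
    (hψφesc : IntegrableOn
      (fun t => p θ₀ t ^ (2 - α) * ‖ψ t‖ * ‖φ t‖) {t | 0 < p θ₀ t} ν)
    (ρ : EuclideanSpace ℝ (Fin M) → EuclideanSpace ℝ (Fin N))
    (hρ : ∀ θ, ρ θ = ∫ t, p θ t • ψ t ∂ν) :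
    ∃ J : EuclideanSpace ℝ (Fin M) →L[ℝ] EuclideanSpace ℝ (Fin N),
      HasFDerivAt ρ J θ₀ ∧
      ∀ v, J v =
        (∫ t in {t | 0 < p θ₀ t}, (p θ₀ t ^ (2 - α) * ⟪φ t, v⟫) • ψ t ∂ν) -
          ((∫ t in {t | 0 < p θ₀ t}, p θ₀ t ^ (2 - α) ∂ν)⁻¹ *
              ⟪∫ t in {t | 0 < p θ₀ t}, (p θ₀ t ^ (2 - α)) • φ t ∂ν, v⟫) •
            (∫ t in {t | 0 < p θ₀ t}, (p θ₀ t ^ (2 - α)) • ψ t ∂ν) := by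
  obtain ⟨ε, hε, hεU, g, g', hg, hg', hbd⟩ := hdom
  obtain rfl : p = entmaxDensity α φ A := funext₂ hp
  obtain rfl : gradp = entmaxGrad α φ A G := funext₂ hgradp
  obtain rfl : ρ = fun θ => ∫ t, entmaxDensity α φ A θ t • ψ t ∂ν := funext hρ
  have hp_meas := measurable_entmaxDensity α hφ A
  have hp_int : ∀ θ ∈ ball θ₀ ε, Integrable (entmaxDensity α φ A θ) ν := fun θ hθ =>
    .of_integral_ne_zero (by rw [hp_one θ (hεU hθ)]; exact one_ne_zero)
  obtain ⟨Γ, hΓ_meas, hΓ⟩ := exists_measurable_eq_entmaxGrad hφ hU hA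
  replace hΓ : ∃ Γ, Measurable Γ ∧ ∀ θ ∈ ball θ₀ ε, ∀ t, Γ (θ, t) = entmaxGrad α φ A G θ t :=
    ⟨Γ, hΓ_meas, fun θ hθ => hΓ θ (hεU hθ)⟩
  have hdiff' := hdiff.mono fun t ht θ hθ => ht θ (hεU hθ)
  obtain ⟨hJ₁_int, hJ₁⟩ := hasFDerivAt_integral_smul_of_hasGradientAt (ψ := fun _ => (1 : ℝ))
    hε hp_meas hp_int stronglyMeasurable_const (by simpa using hp_int θ₀ (mem_ball_self hε)) hΓ
    hdiff' (fun θ hθ => (hbd θ hθ).mono fun t ht => by simpa using ht.1) hg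
  have hJ₁_zero := hJ₁.unique <| (hasFDerivAt_const (1 : ℝ) θ₀).congr_of_eventuallyEq <|
    eventually_of_mem (ball_mem_nhds θ₀ hε) fun θ hθ => by simpa using hp_one θ (hεU hθ)
  have hG : ∀ v, ⟪G θ₀, v⟫ = _ := fun v =>
    inner_eq_of_integral_inner_ite_eq_zero (entmaxDensity_nonneg α φ A θ₀) (hp_meas θ₀)
      hφ.aestronglyMeasurable hZ hZpos.ne' hφesc <| by
        have := congrArg (· v) hJ₁_zero
        rw [ContinuousLinearMap.integral_apply hJ₁_int] at this
        simpa [entmaxGrad] using this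
  obtain ⟨hJ_int, hJ⟩ := hasFDerivAt_integral_smul_of_hasGradientAt hε hp_meas hp_int
    hψ.stronglyMeasurable hpψ hΓ hdiff' (fun θ hθ => (hbd θ hθ).mono fun t ht => ht.2) hg'
  refine ⟨_, hJ, fun v => ?_⟩
  rw [ContinuousLinearMap.integral_apply hJ_int]
  simp only [ContinuousLinearMap.smulRight_apply, InnerProductSpace.toDual_apply_apply,
    entmaxGrad]
  rw [integral_inner_ite_smul_eq (entmaxDensity_nonneg α φ A θ₀) (hp_meas θ₀)
    hφ.aestronglyMeasurable hψ.aestronglyMeasurable _ v hψφesc hψesc, hG v]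

/-- The continuous α-entmax attention map `ρ(θ) = ∫ p_θ ψ dν` is differentiable at `θ₀`
and its Jacobian equals the generalized `(2−α)`-covariance
`cov_{p,2−α}(ψ, φ) = ∫_{p>0} p^(2−α) ψ φᵀ − (∫ p^(2−α) ψ)(∫ p^(2−α) φ)ᵀ / ∫ p^(2−α)`. -/
theorem stmt_7 {S : Type*} [MeasurableSpace S] (ν : Measure S)
    (α : ℝ) (hα1 : 1 < α) (hα2 : α ≤ 2) (M N : ℕ)
    (φ : S → EuclideanSpace ℝ (Fin M)) (hφ : Measurable φ)
    (ψ : S → EuclideanSpace ℝ (Fin N)) (hψ : Measurable ψ)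
    (U : Set (EuclideanSpace ℝ (Fin M))) (hU : IsOpen U)
    (A : EuclideanSpace ℝ (Fin M) → ℝ)
    (G : EuclideanSpace ℝ (Fin M) → EuclideanSpace ℝ (Fin M))
    (hA : ∀ θ ∈ U, HasGradientAt A (G θ) θ)
    (p : EuclideanSpace ℝ (Fin M) → S → ℝ)
    (hp : ∀ θ t, p θ t = max ((α - 1) * (⟪θ, φ t⟫ - A θ) + 1) 0 ^ (1 / (α - 1)))
    (hp_one : ∀ θ ∈ U, ∫ t, p θ t ∂ν = 1)
    (gradp : EuclideanSpace ℝ (Fin M) → S → EuclideanSpace ℝ (Fin M))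
    (hgradp : ∀ θ t, gradp θ t =
      if p θ t = 0 then 0 else (p θ t ^ (2 - α)) • (φ t - G θ))
    (hdiff : ∀ᵐ t ∂ν, ∀ θ ∈ U, HasGradientAt (fun θ' => p θ' t) (gradp θ t) θ)
    (θ₀ : EuclideanSpace ℝ (Fin M)) (hθ₀ : θ₀ ∈ U)
    (hdom : ∃ ε > 0, Metric.ball θ₀ ε ⊆ U ∧
      ∃ g g' : S → ℝ, Integrable g ν ∧ Integrable g' ν ∧
        ∀ θ ∈ Metric.ball θ₀ ε, ∀ᵐ t ∂ν,
          ‖gradp θ t‖ ≤ g t ∧ ‖ψ t‖ * ‖gradp θ t‖ ≤ g' t)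
    (hZ : IntegrableOn (fun t => p θ₀ t ^ (2 - α)) {t | 0 < p θ₀ t} ν)
    (hZpos : 0 < ∫ t in {t | 0 < p θ₀ t}, p θ₀ t ^ (2 - α) ∂ν)
    (hpψ : Integrable (fun t => p θ₀ t • ψ t) ν)
    (hψesc : IntegrableOn (fun t => (p θ₀ t ^ (2 - α)) • ψ t) {t | 0 < p θ₀ t} ν)
    (hφesc : IntegrableOn (fun t => p θ₀ t ^ (2 - α) * ‖φ t‖) {t | 0 < p θ₀ t} ν)
    (hψφesc : IntegrableOn
      (fun t => p θ₀ t ^ (2 - α) * ‖ψ t‖ * ‖φ t‖) {t | 0 < p θ₀ t} ν)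
    (ρ : EuclideanSpace ℝ (Fin M) → EuclideanSpace ℝ (Fin N))
    (hρ : ∀ θ, ρ θ = ∫ t, p θ t • ψ t ∂ν) :
    ∃ J : EuclideanSpace ℝ (Fin M) →L[ℝ] EuclideanSpace ℝ (Fin N),
      HasFDerivAt ρ J θ₀ ∧
      ∀ v, J v =
        (∫ t in {t | 0 < p θ₀ t}, (p θ₀ t ^ (2 - α) * ⟪φ t, v⟫) • ψ t ∂ν) -
          ((∫ t in {t | 0 < p θ₀ t}, p θ₀ t ^ (2 - α) ∂ν)⁻¹ *
              ⟪∫ t in {t | 0 < p θ₀ t}, (p θ₀ t ^ (2 - α)) • φ t ∂ν, v⟫) •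
            (∫ t in {t | 0 < p θ₀ t}, (p θ₀ t ^ (2 - α)) • ψ t ∂ν) :=
  stmt_7_general ν α M N φ hφ ψ hψ U hU A G hA p hp hp_one gradp hgradp hdiff θ₀ hdom hZ hZpos hpψ
    hψesc hφesc hψφesc ρ hρ
end

section
/- Let n ≥ 1, let Σ be a positive definite n×n real matrix, and let h ≥ 0. Then ∫_{ℝⁿ} max(h − (1/2) xᵀΣ⁻¹x, 0) dx = (√((2π)ⁿ det Σ) / Γ(n/2 + 2)) · h^{n/2 + 1}, where Γ is the Gamma function. -/
/-!
Writing `C = S * S` with `S` the positive square root of `C`, the substitution `x = S y` turns the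
quadratic form into `‖y‖²` at the cost of the Jacobian `det S = √(det C)`. In polar coordinates
the radial integral is `n · vol(B₁) · ∫₀^√(2h) rⁿ⁻¹ (h - r²/2) dr` with
`vol(B₁) = π^(n/2) / Γ(n/2 + 1)`, and `Γ(n/2 + 2) = (n/2 + 1) Γ(n/2 + 1)` absorbs the factor
`n (n + 2)` coming from the one-dimensional integral.
-/

open Real Matrix MeasureTheory Set Metric

section

variable {ι E : Type*} [Fintype ι] [NormedAddCommGroup E] [NormedSpace ℝ E]

theorem Matrix.integral_comp_mulVec [DecidableEq ι] {M : Matrix ι ι ℝ} (hM : M.det ≠ 0)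
    (f : (ι → ℝ) → E) : ∫ y, f (M *ᵥ y) = |M.det|⁻¹ • ∫ x, f x := by
  have hinj : Function.Injective (toLin' M) :=
    mulVec_injective_iff_isUnit.2 ((isUnit_iff_isUnit_det M).2 hM.isUnit)
  have hemb : MeasurableEmbedding (toLin' M) :=
    (LinearEquiv.ofInjectiveEndo _ hinj).toContinuousLinearEquiv.toHomeomorph.measurableEmbedding
  calc ∫ y, f (M *ᵥ y) = ∫ x, f x ∂(Measure.map (toLin' M) volume) := (hemb.integral_map f).symm
    _ = |M.det|⁻¹ • ∫ x, f x := by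
      rw [Real.map_matrix_volume_pi_eq_smul_volume_pi hM, integral_smul_measure,
        ENNReal.toReal_ofReal (abs_nonneg _), abs_inv]

open scoped MatrixOrder in
theorem Matrix.PosDef.integral_comp_dotProduct_inv_mulVec [DecidableEq ι] {C : Matrix ι ι ℝ}
    (hC : C.PosDef) (g : ℝ → E) :
    ∫ x, g (x ⬝ᵥ C⁻¹ *ᵥ x) = √C.det • ∫ y : ι → ℝ, g (y ⬝ᵥ y) := by
  set S := CFC.sqrt C
  have hSdet : S.det = √C.det := by rw [hC.posSemidef.det_sqrt, RCLike.sqrt_real]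
  have hSpos : 0 < S.det := hSdet ▸ Real.sqrt_pos.2 hC.det_pos
  have hSS : S * S = C := CFC.sqrt_mul_sqrt_self C hC.posSemidef.nonneg
  have hST : Sᵀ = S := (CFC.sqrt_nonneg C).posSemidef.isHermitian
  have hquad (y : ι → ℝ) : S *ᵥ y ⬝ᵥ C⁻¹ *ᵥ S *ᵥ y = y ⬝ᵥ y := by
    have hunit : IsUnit S.det := hSpos.ne'.isUnit
    have hSCS : S * (C⁻¹ * S) = 1 := by
      rw [← hSS, mul_inv_rev, ← Matrix.mul_assoc, ← Matrix.mul_assoc, mul_nonsing_inv _ hunit,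
        Matrix.one_mul, nonsing_inv_mul _ hunit]
    nth_rw 1 [← hST]
    rw [mulVec_mulVec, mulVec_transpose, dotProduct_mulVec, vecMul_vecMul, hSCS, vecMul_one]
  have hsubst := integral_comp_mulVec hSpos.ne' (fun x ↦ g (x ⬝ᵥ C⁻¹ *ᵥ x))
  simp only [hquad] at hsubst
  rw [hsubst, smul_smul, abs_of_pos hSpos, ← hSdet, mul_inv_cancel₀ hSpos.ne', one_smul]

theorem integral_comp_dotProduct_self_eq_integral_norm_sq (g : ℝ → E) :
    ∫ y : ι → ℝ, g (y ⬝ᵥ y) = ∫ z : EuclideanSpace ℝ ι, g (‖z‖ ^ 2) := by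
  rw [← (EuclideanSpace.volume_preserving_symm_measurableEquiv_toLp ι).integral_comp']
  congr! 2 with z
  rw [EuclideanSpace.norm_sq_eq]
  simp only [Real.norm_eq_abs, sq, abs_mul_abs_self, dotProduct]
  rfl

theorem EuclideanSpace.integral_fun_norm [Nonempty ι] (f : ℝ → E) :
    ∫ z : EuclideanSpace ℝ ι, f ‖z‖ =
      (Fintype.card ι * (√π ^ Fintype.card ι / Gamma (Fintype.card ι / 2 + 1))) •
        ∫ r in Ioi (0 : ℝ), r ^ (Fintype.card ι - 1) • f r := by
  rw [integral_fun_norm_addHaar, finrank_euclideanSpace, measureReal_def,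
    EuclideanSpace.volume_ball, ENNReal.ofReal_one, one_pow, one_mul,
    ENNReal.toReal_ofReal (by positivity), ← Nat.cast_smul_eq_nsmul ℝ, smul_smul]

end

theorem integral_Ioi_pow_mul_max_sub_half_sq {n : ℕ} (hn : 1 ≤ n) {h : ℝ} (hh : 0 ≤ h) :
    ∫ r in Ioi (0 : ℝ), r ^ (n - 1) * max (h - 1 / 2 * r ^ 2) 0 =
      (2 * h) ^ ((n : ℝ) / 2 + 1) / (n * (n + 2)) := by
  obtain ⟨m, rfl⟩ := Nat.exists_eq_add_of_le' hn
  rw [Nat.add_sub_cancel]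
  set b := √(2 * h)
  have hb0 : 0 ≤ b := Real.sqrt_nonneg _
  have hb2 : b ^ 2 = 2 * h := Real.sq_sqrt (by linarith)
  have houter : ∀ r ∈ Ioi (0 : ℝ) \ Ioc 0 b, r ^ m * max (h - 1 / 2 * r ^ 2) 0 = 0 := by
    rintro r ⟨hr0, hrb⟩
    have hbr : b < r := lt_of_not_ge fun hrb' ↦ hrb ⟨hr0, hrb'⟩
    rw [max_eq_right, mul_zero]
    nlinarith [pow_lt_pow_left₀ hbr hb0 two_ne_zero]
  have hinner : EqOn (fun r ↦ r ^ m * max (h - 1 / 2 * r ^ 2) 0)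
      (fun r ↦ h * r ^ m - 1 / 2 * r ^ (m + 2)) (uIcc 0 b) := by
    intro r hr
    rw [uIcc_of_le hb0] at hr
    dsimp only
    rw [max_eq_left (by nlinarith [pow_le_pow_left₀ hr.1 hr.2 2]), pow_add]
    ring
  rw [setIntegral_eq_of_subset_of_forall_sdiff_eq_zero measurableSet_Ioi Ioc_subset_Ioi_self houter,
    ← intervalIntegral.integral_of_le hb0, intervalIntegral.integral_congr hinner,
    intervalIntegral.integral_sub (Continuous.intervalIntegrable (by fun_prop) _ _)
      (Continuous.intervalIntegrable (by fun_prop) _ _),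
    intervalIntegral.integral_const_mul, intervalIntegral.integral_const_mul, integral_pow,
    integral_pow]
  have hpow : (2 * h) ^ (((m + 1 : ℕ) : ℝ) / 2 + 1) = b ^ (m + 1) * b ^ 2 := by
    rw [← pow_add, show ((m + 1 : ℕ) : ℝ) / 2 + 1 = ((m + 3 : ℕ) : ℝ) / 2 by push_cast; ring,
      rpow_div_two_eq_sqrt _ (by linarith), rpow_natCast]
  rw [hpow, show b ^ (m + 2 + 1) = b ^ (m + 1) * b ^ 2 by ring, hb2]
  simp only [zero_pow (Nat.succ_ne_zero _), sub_zero]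
  push_cast
  field_simp
  ring

/-- Volume under the truncated paraboloid:
`∫_{ℝⁿ} [h − (1/2) xᵀ Σ⁻¹ x]₊ dx = (√((2π)ⁿ det Σ) / Γ(n/2 + 2)) · h^(n/2 + 1)`. -/
theorem stmt_10 (n : ℕ) (hn : 1 ≤ n) (C : Matrix (Fin n) (Fin n) ℝ) (hC : C.PosDef)
    (h : ℝ) (hh : 0 ≤ h) :
    (∫ x : Fin n → ℝ, max (h - (1 / 2) * (x ⬝ᵥ C⁻¹.mulVec x)) 0) =
      Real.sqrt ((2 * Real.pi) ^ n * C.det) / Real.Gamma ((n : ℝ) / 2 + 2) *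
        h ^ ((n : ℝ) / 2 + 1) := by
  have : Nonempty (Fin n) := ⟨⟨0, hn⟩⟩
  rw [hC.integral_comp_dotProduct_inv_mulVec (fun q ↦ max (h - 1 / 2 * q) 0),
    integral_comp_dotProduct_self_eq_integral_norm_sq (fun q ↦ max (h - 1 / 2 * q) 0),
    EuclideanSpace.integral_fun_norm (fun r ↦ max (h - 1 / 2 * r ^ 2) 0)]
  simp only [Fintype.card_fin, smul_eq_mul]
  rw [integral_Ioi_pow_mul_max_sub_half_sq hn hh]
  have hΓ : Gamma ((n : ℝ) / 2 + 2) = ((n : ℝ) / 2 + 1) * Gamma ((n : ℝ) / 2 + 1) := by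
    rw [show (n : ℝ) / 2 + 2 = (n / 2 + 1) + 1 by ring, Gamma_add_one (by positivity)]
  have h2h : (2 * h) ^ ((n : ℝ) / 2 + 1) = 2 * √2 ^ n * h ^ ((n : ℝ) / 2 + 1) := by
    rw [mul_rpow zero_le_two hh, rpow_add two_pos, rpow_one, rpow_div_two_eq_sqrt _ zero_le_two,
      rpow_natCast]
    ring
  have hsqrt : √((2 * π) ^ n * C.det) = √2 ^ n * √π ^ n * √C.det := by
    rw [sqrt_mul (by positivity), ← mul_pow, ← sqrt_mul zero_le_two,
      ← sqrt_sq (pow_nonneg (sqrt_nonneg _) n), ← pow_mul, mul_comm n, pow_mul,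
      sq_sqrt (by positivity)]
  rw [hΓ, h2h, hsqrt]
  field_simp
end

section
/- Let g : [0,∞) → ℝ be convex and continuously differentiable, and let a > 0 satisfy a·g'(a) − g(a) + g(0) = 1/2. Then for every μ ∈ ℝ and σ > 0, ∫_ℝ max((1/σ)(g'(a) − g'(|t−μ|/σ)), 0) dt = 1; that is, λ = −g'(a)/σ normalizes the location-scale density [−λ − (1/σ) g'(|t−μ|/σ)]_+. -/
/-!
Substituting `u = (t - μ) / σ` and folding the even integrand onto `(0, ∞)` turns the integral
into `2 ∫_{u > 0} [g'(a) - g'(u)]₊ du`. Convexity makes `g'` monotone, so the integrand is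
`g'(a) - g'(u)` on `(0, a]` and vanishes beyond `a`; by the fundamental theorem of calculus the
integral is `2 (a g'(a) - (g(a) - g(0))) = 1`.
-/

open Real MeasureTheory Set

theorem ConvexOn.monotoneOn_of_hasDerivWithinAt {S : Set ℝ} {f f' : ℝ → ℝ}
    (hf : ConvexOn ℝ S f) (hf' : ∀ x ∈ S, HasDerivWithinAt f (f' x) S x) :
    MonotoneOn f' S := by
  intro x hx y hy hxy
  rcases hxy.eq_or_lt with rfl | hlt
  · rfl
  exact (hf.le_slope_of_hasDerivWithinAt hx hy hlt (hf' x hx)).trans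
    (hf.slope_le_of_hasDerivWithinAt hx hy hlt (hf' y hy))

theorem integral_comp_locationScale (φ : ℝ → ℝ) (μ : ℝ) {σ : ℝ} (hσ : 0 < σ) :
    ∫ t, (1 / σ) * φ ((t - μ) / σ) = ∫ u, φ u := by
  rw [integral_const_mul, integral_sub_right_eq_self (fun t ↦ φ (t / σ)) μ,
    Measure.integral_comp_div, abs_of_pos hσ, smul_eq_mul, ← mul_assoc, one_div,
    inv_mul_cancel₀ hσ.ne', one_mul]

theorem setIntegral_Ioi_max_sub_of_monotoneOn {φ : ℝ → ℝ} (hφ : MonotoneOn φ (Ici 0))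
    {a : ℝ} (ha : 0 ≤ a) :
    ∫ u in Ioi 0, max (φ a - φ u) 0 = ∫ u in (0)..a, (φ a - φ u) := by
  have hsupport : EqOn (fun u ↦ max (φ a - φ u) 0) ((Ioc 0 a).indicator (fun u ↦ φ a - φ u))
      (Ioi 0) := by
    intro u (hu : 0 < u)
    by_cases hua : u ≤ a
    · rw [indicator_of_mem (show u ∈ Ioc 0 a from ⟨hu, hua⟩)]
      exact max_eq_left (sub_nonneg.2 (hφ hu.le ha hua))
    · rw [indicator_of_notMem fun h ↦ hua h.2]
      exact max_eq_right (sub_nonpos.2 (hφ ha hu.le (not_le.1 hua).le))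
  rw [setIntegral_congr_fun measurableSet_Ioi hsupport, setIntegral_indicator measurableSet_Ioc,
    inter_eq_right.2 Ioc_subset_Ioi_self, intervalIntegral.integral_of_le ha]

theorem ConvexOn.intervalIntegral_sub_deriv_of_hasDerivWithinAt {g g' : ℝ → ℝ}
    (hconv : ConvexOn ℝ (Ici 0) g)
    (hderiv : ∀ s ∈ Ici (0 : ℝ), HasDerivWithinAt g (g' s) (Ici 0) s) {a : ℝ} (ha : 0 ≤ a) :
    ∫ u in (0)..a, (g' a - g' u) = a * g' a - (g a - g 0) := by
  have hint : IntervalIntegrable g' volume 0 a := by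
    refine ((hconv.monotoneOn_of_hasDerivWithinAt hderiv).mono ?_).intervalIntegrable
    rw [uIcc_of_le ha]
    exact Icc_subset_Ici_self
  have hftc : ∫ u in (0)..a, g' u = g a - g 0 :=
    intervalIntegral.integral_eq_sub_of_hasDeriv_right_of_le ha
      (fun x hx ↦ ((hderiv x hx.1).continuousWithinAt).mono Icc_subset_Ici_self)
      (fun x hx ↦ ((hderiv x hx.1.le).hasDerivAt (Ici_mem_nhds hx.1)).hasDerivWithinAt) hint
  rw [intervalIntegral.integral_sub intervalIntegrable_const hint, intervalIntegral.integral_const,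
    hftc, sub_zero, smul_eq_mul]

theorem stmt_12_general (g g' : ℝ → ℝ)
    (hconv : ConvexOn ℝ (Set.Ici 0) g)
    (hderiv : ∀ s ∈ Set.Ici (0 : ℝ), HasDerivWithinAt g (g' s) (Set.Ici 0) s)
    (a : ℝ) (ha : 0 < a) (haeq : a * g' a - g a + g 0 = 1 / 2)
    (μ σ : ℝ) (hσ : 0 < σ) :
    (∫ t : ℝ, max ((1 / σ) * (g' a - g' (|t - μ| / σ))) 0) = 1 := by
  have hmono := hconv.monotoneOn_of_hasDerivWithinAt hderiv
  have hscale (t : ℝ) : max ((1 / σ) * (g' a - g' (|t - μ| / σ))) 0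
      = (1 / σ) * max (g' a - g' |(t - μ) / σ|) 0 := by
    rw [mul_max_of_nonneg _ _ (by positivity), mul_zero, abs_div, abs_of_pos hσ]
  simp_rw [hscale]
  rw [integral_comp_locationScale (fun u ↦ max (g' a - g' |u|) 0) μ hσ,
    integral_comp_abs (f := fun u ↦ max (g' a - g' u) 0),
    setIntegral_Ioi_max_sub_of_monotoneOn hmono ha.le,
    hconv.intervalIntegral_sub_deriv_of_hasDerivWithinAt hderiv ha.le]
  linarith

/-- Normalization of the continuous sparsemax location-scale density
`[(1/σ)(g'(a) − g'(|t−μ|/σ))]₊`, where `g` is convex and continuously differentiable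
on `[0,∞)` and `a > 0` satisfies `a g'(a) − g(a) + g(0) = 1/2`. -/
theorem stmt_12 (g g' : ℝ → ℝ)
    (hconv : ConvexOn ℝ (Set.Ici 0) g)
    (hderiv : ∀ s ∈ Set.Ici (0 : ℝ), HasDerivWithinAt g (g' s) (Set.Ici 0) s)
    (hcont : ContinuousOn g' (Set.Ici 0))
    (a : ℝ) (ha : 0 < a) (haeq : a * g' a - g a + g 0 = 1 / 2)
    (μ σ : ℝ) (hσ : 0 < σ) :
    (∫ t : ℝ, max ((1 / σ) * (g' a - g' (|t - μ| / σ))) 0) = 1 :=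
  stmt_12_general g g' hconv hderiv a ha haeq μ σ hσ
end
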